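/- arXiv:2309.03810 — 7 statements merged into one kernel-verified Lean document; each statement's English description precedes it below -/
import Mathlib

section
/- Let G be a 3-regular finite simple graph on n ≥ 3 vertices and let C_n be the cycle graph on n vertices. Then δ_edit(G, C_n) ≤ n/2 if and only if G has a Hamiltonian cycle. -/
open SimpleGraph

section MismatchDefs

variable {V W : Type*}

/-- The mismatch graph `G^π − H`: the symmetric difference of the image of `G` under the
bijection `π` with `H`, as a graph on `V(H)`. Its edges are the positive edges
(edges of `G^π` not in `H`) together with the negative edges (edges of `H` not in `G^π`). -/
def mismatchGraph (G : SimpleGraph V) (H : SimpleGraph W) (π : V ≃ W) : SimpleGraph W :=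
  symmDiff (G.map π.toEmbedding) H

/-- The degree of a vertex in the mismatch graph `G^π − H`. -/
noncomputable def mismatchDeg (G : SimpleGraph V) (H : SimpleGraph W) (π : V ≃ W) (x : W) : ℕ :=
  ((mismatchGraph G H π).neighborSet x).ncard

/-- The number of positive edges of `G^π − H` incident to `x`. -/
noncomputable def posDeg (G : SimpleGraph V) (H : SimpleGraph W) (π : V ≃ W) (x : W) : ℕ :=
  ((G.map π.toEmbedding).neighborSet x \ H.neighborSet x).ncard

/-- The number of negative edges of `G^π − H` incident to `x`. -/
noncomputable def negDeg (G : SimpleGraph V) (H : SimpleGraph W) (π : V ≃ W) (x : W) : ℕ :=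
  (H.neighborSet x \ (G.map π.toEmbedding).neighborSet x).ncard

/-- The maximum mismatch count `MMC(π)`: the maximum degree of the mismatch graph `G^π − H`. -/
noncomputable def MMC [Fintype W] (G : SimpleGraph V) (H : SimpleGraph W) (π : V ≃ W) : ℕ :=
  Finset.univ.sup (mismatchDeg G H π)

/-- The edit mismatch norm `μ_edit(G^π, H)`: the number of edges of the mismatch graph. -/
noncomputable def muEdit (G : SimpleGraph V) (H : SimpleGraph W) (π : V ≃ W) : ℕ :=
  (mismatchGraph G H π).edgeSet.ncard

/-- The edit distance `δ_edit(G, H)`: the minimum of `μ_edit(G^π, H)` over all bijections. -/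
noncomputable def deltaEdit (G : SimpleGraph V) (H : SimpleGraph W) : ℕ :=
  ⨅ π : V ≃ W, muEdit G H π

open Classical in
/-- The signed adjacency matrix of the mismatch graph `G^π − H`:
`+1` on positive edges, `−1` on negative edges, `0` otherwise. -/
noncomputable def signedAdj (G : SimpleGraph V) (H : SimpleGraph W) (π : V ≃ W) :
    Matrix W W ℝ := fun x y =>
  if (G.map π.toEmbedding).Adj x y ∧ ¬ H.Adj x y then 1
  else if H.Adj x y ∧ ¬ (G.map π.toEmbedding).Adj x y then -1 else 0

/-- The `ℓ_p` norm of a vector over a finite index type. -/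
noncomputable def lpNorm [Fintype W] (p : ℝ) (x : W → ℝ) : ℝ :=
  (∑ i, |x i| ^ p) ^ p⁻¹

/-- The `ℓ_p`-operator norm of a matrix: `sup_{x ≠ 0} ‖Mx‖_p / ‖x‖_p`. -/
noncomputable def lpOpNorm [Fintype W] (p : ℝ) (M : Matrix W W ℝ) : ℝ :=
  ⨆ x : {x : W → ℝ // x ≠ 0}, lpNorm p (M.mulVec x.1) / lpNorm p x.1

end MismatchDefs

/-! A 3-regular graph on `n` vertices has `3n/2` edges and `C_n` has `n`, so
`μ_edit(G^π, C_n) = 5n/2 - 2 |E(G^π) ∩ E(C_n)|`. This is at most `n/2` exactly when every edge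
of `C_n` is an edge of `G^π`, i.e. when the relabelled `G` contains `C_n` as a spanning subgraph,
which is a Hamiltonian cycle of `G`. -/

theorem Set.ncard_symmDiff_add_two_mul_ncard_inter {α : Type*} {s t : Set α}
    (hs : s.Finite) (ht : t.Finite) :
    (symmDiff s t).ncard + 2 * (s ∩ t).ncard = s.ncard + t.ncard := by
  have hst := Set.ncard_inter_add_ncard_sdiff_eq_ncard s t hs
  have hts := Set.ncard_inter_add_ncard_sdiff_eq_ncard t s ht
  rw [Set.inter_comm] at hts
  rw [Set.symmDiff_def, Set.ncard_union_eq disjoint_sdiff_sdiff hs.sdiff ht.sdiff]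
  omega

namespace SimpleGraph

variable {V W : Type*}

theorem edgeSet_symmDiff (G₁ G₂ : SimpleGraph V) :
    (symmDiff G₁ G₂).edgeSet = symmDiff G₁.edgeSet G₂.edgeSet := by
  rw [symmDiff_def, symmDiff_def, edgeSet_sup, edgeSet_sdiff, edgeSet_sdiff]
  rfl

theorem ncard_edgeSet_map_equiv (G : SimpleGraph V) (π : V ≃ W) :
    (G.map π.toEmbedding).edgeSet.ncard = G.edgeSet.ncard := by
  simp only [← Nat.card_coe_set_eq]
  exact Nat.card_congr (Iso.map π G).mapEdgeSet.symm

theorem IsRegularOfDegree.two_mul_ncard_edgeSet [Fintype V] {G : SimpleGraph V}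
    [DecidableRel G.Adj] {d : ℕ} (h : G.IsRegularOfDegree d) :
    2 * G.edgeSet.ncard = d * Fintype.card V := by
  classical
  rw [← coe_edgeFinset, Set.ncard_coe_finset, ← sum_degrees_eq_twice_card_edges,
    Finset.sum_congr rfl fun v _ => h v, Finset.sum_const, Finset.card_univ, smul_eq_mul,
    mul_comm]

theorem ncard_edgeSet_cycleGraph {n : ℕ} (hn : 3 ≤ n) : (cycleGraph n).edgeSet.ncard = n := by
  obtain ⟨m, rfl⟩ : ∃ m, n = m + 3 := ⟨n - 3, by omega⟩
  have h := IsRegularOfDegree.two_mul_ncard_edgeSet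
    (G := cycleGraph (m + 3)) (d := 2) fun _ => cycleGraph_degree_three_le
  rw [Fintype.card_fin] at h
  omega

theorem isContained_iff_exists_equiv_le [Finite V] {G : SimpleGraph V} {H : SimpleGraph W}
    (hcard : Nat.card V = Nat.card W) :
    H ⊑ G ↔ ∃ π : V ≃ W, H ≤ G.map π.toEmbedding := by
  constructor
  · rintro ⟨f⟩
    have : Finite W := Finite.of_injective f f.injective
    let e := Equiv.ofBijective f (f.injective.bijective_of_nat_card_le hcard.le)
    refine ⟨e.symm, fun x y hxy => (map_adj _ _ _ _).mpr
      ⟨f x, f y, f.toHom.map_adj hxy, e.symm_apply_apply x, e.symm_apply_apply y⟩⟩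
  · rintro ⟨π, hπ⟩
    exact ⟨(Iso.map π G).symm.toCopy.comp (Copy.ofLE _ _ hπ)⟩

theorem isHamiltonian_iff_cycleGraph_isContained [Fintype V] [DecidableEq V]
    {G : SimpleGraph V} (hV : 3 ≤ Fintype.card V) :
    G.IsHamiltonian ↔ cycleGraph (Fintype.card V) ⊑ G := by
  simp only [IsHamiltonian, cycleGraph_isContained_iff hV,
    Walk.isHamiltonianCycle_iff_isCycle_and_length_eq]
  exact ⟨fun h => h (by omega), fun h _ => h⟩

end SimpleGraph

section EditDistance

variable {V W : Type*}

theorem muEdit_add_two_mul_ncard_inter [Finite W] (G : SimpleGraph V) (H : SimpleGraph W)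
    (π : V ≃ W) :
    muEdit G H π + 2 * ((G.map π.toEmbedding).edgeSet ∩ H.edgeSet).ncard =
      (G.map π.toEmbedding).edgeSet.ncard + H.edgeSet.ncard := by
  rw [muEdit, mismatchGraph, edgeSet_symmDiff]
  exact Set.ncard_symmDiff_add_two_mul_ncard_inter (Set.toFinite _) (Set.toFinite _)

theorem deltaEdit_le_muEdit (G : SimpleGraph V) (H : SimpleGraph W) (π : V ≃ W) :
    deltaEdit G H ≤ muEdit G H π :=
  ciInf_le (OrderBot.bddBelow _) π

theorem exists_muEdit_eq_deltaEdit [Nonempty (V ≃ W)] (G : SimpleGraph V) (H : SimpleGraph W) :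
    ∃ π : V ≃ W, muEdit G H π = deltaEdit G H :=
  ciInf_mem _

theorem two_mul_muEdit_cycleGraph_le_iff [Fintype V] {G : SimpleGraph V} [DecidableRel G.Adj]
    (hreg : G.IsRegularOfDegree 3) {n : ℕ} (hn : 3 ≤ n) (hcard : Fintype.card V = n)
    (π : V ≃ Fin n) :
    2 * muEdit G (cycleGraph n) π ≤ n ↔ cycleGraph n ≤ G.map π.toEmbedding := by
  have hsum := muEdit_add_two_mul_ncard_inter G (cycleGraph n) π
  have hA : 2 * (G.map π.toEmbedding).edgeSet.ncard = 3 * n := by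
    rw [ncard_edgeSet_map_equiv, hreg.two_mul_ncard_edgeSet, hcard]
  have hB := ncard_edgeSet_cycleGraph hn
  set A := (G.map π.toEmbedding).edgeSet
  set B := (cycleGraph n).edgeSet
  calc 2 * muEdit G (cycleGraph n) π ≤ n ↔ B.ncard ≤ (A ∩ B).ncard := by omega
    _ ↔ A ∩ B = B := ⟨fun h => Set.eq_of_subset_of_ncard_le Set.inter_subset_right h
        (Set.toFinite _), fun h => h.symm ▸ le_rfl⟩
    _ ↔ cycleGraph n ≤ G.map π.toEmbedding := by
      rw [Set.inter_eq_right, edgeSet_subset_edgeSet]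

end EditDistance

/-- For a 3-regular graph `G` on `n ≥ 3` vertices,
`δ_edit(G, C_n) ≤ n/2` if and only if `G` has a Hamiltonian cycle. -/
theorem statement_2 {V : Type*} [Fintype V] [DecidableEq V] (n : ℕ) (hn : 3 ≤ n)
    (G : SimpleGraph V) [DecidableRel G.Adj] (hcard : Fintype.card V = n)
    (hreg : G.IsRegularOfDegree 3) :
    2 * deltaEdit G (SimpleGraph.cycleGraph n) ≤ n ↔ G.IsHamiltonian := by
  have : Nonempty (V ≃ Fin n) := ⟨Fintype.equivFinOfCardEq hcard⟩
  calc 2 * deltaEdit G (cycleGraph n) ≤ n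
      ↔ ∃ π : V ≃ Fin n, 2 * muEdit G (cycleGraph n) π ≤ n := by
        obtain ⟨π₀, hπ₀⟩ := exists_muEdit_eq_deltaEdit G (cycleGraph n)
        refine ⟨fun h => ⟨π₀, hπ₀ ▸ h⟩, fun ⟨π, hπ⟩ => ?_⟩
        exact (Nat.mul_le_mul_left 2 (deltaEdit_le_muEdit G _ π)).trans hπ
    _ ↔ ∃ π : V ≃ Fin n, cycleGraph n ≤ G.map π.toEmbedding :=
        exists_congr (two_mul_muEdit_cycleGraph_le_iff hreg hn hcard)
    _ ↔ cycleGraph n ⊑ G :=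
        (isContained_iff_exists_equiv_le (by simp [Nat.card_eq_fintype_card, hcard])).symm
    _ ↔ G.IsHamiltonian := by
        subst hcard
        exact (isHamiltonian_iff_cycleGraph_isContained hn).symm
end

section
/- Let k ≥ 2, let G_k be a 3-regular bipartite graph on 2k vertices with bipartition into independent sets A and B of size k, and let Ĝ_k, Ĥ_k be the graphs constructed from G_k and H_k as described. Let π : V(Ĝ_k) → V(Ĥ_k) be a bijection. Then: (1) if x is a pendant leaf of Ĝ_k (i.e., x ∈ Q_A ∪ Q_B) and π(x) ∈ V(H_k), then MMC(π) > 6; (2) if x ∈ A and π(x) ∈ Odd(2k), then MMC(π) > 6; (3) if π is (G_k, H_k)-conservative with π(A) = Even(2k) and π(B) = Odd(2k), and its restriction σ to V(G_k) satisfies π(v^[i]) = σ(v)^[i] for every v ∈ V(G_k) and every admissible index i, then MMC(π) = MMC(σ) ≤ 6, where MMC(σ) is computed for the mismatch graph G_k^σ − H_k. -/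
open SimpleGraph

/-- The graph `H_k` on vertex set `{0, 1, …, 2k−1}`: the Hamiltonian cycle
`0 − 1 − ⋯ − (2k−1) − 0` together with, for even `k`, the chords `{i, i+2}` for
`i ≡ 0, 1 (mod 4)`, and for odd `k`, the chords `{i, i−2}` for `i ≡ 2 (mod 4)`,
`{i, i+2}` for `i ≡ 3 (mod 4)`, and `{2k−2, 1}`. -/
def Hk (k : ℕ) : SimpleGraph (Fin (2 * k)) :=
  SimpleGraph.fromRel (fun a b =>
    (b.val = a.val + 1) ∨ (a.val = 2 * k - 1 ∧ b.val = 0) ∨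
    (if k % 2 = 0 then
      (a.val % 4 = 0 ∨ a.val % 4 = 1) ∧ b.val = a.val + 2
    else
      (a.val % 4 = 2 ∧ b.val = a.val - 2) ∨ (a.val % 4 = 3 ∧ b.val = a.val + 2) ∨
        (a.val = 2 * k - 2 ∧ b.val = 1)))

/-- Attach `5` new pendant leaves to every vertex satisfying `P` and `12` new pendant
leaves to every other vertex. The leaves of `v` are `Sum.inr ⟨v, i⟩`. -/
def hatGraph {V : Type*} (G : SimpleGraph V) (P : V → Prop) [DecidablePred P] :
    SimpleGraph (V ⊕ Σ v : V, Fin (if P v then 5 else 12)) :=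
  SimpleGraph.fromRel (fun a b =>
    match a, b with
    | Sum.inl u, Sum.inl v => G.Adj u v
    | Sum.inl u, Sum.inr x => u = x.1
    | _, _ => False)

/-- `σ ∈ Res(G_k, H_k)`: the bijection `σ` maps the independent set `A` onto the even
vertices `Even(2k)` (and hence its complement `B` onto the odd vertices `Odd(2k)`). -/
def InRes {V : Type*} (k : ℕ) (A : Finset V) (σ : V ≃ Fin (2 * k)) : Prop :=
  ∀ v, v ∈ A ↔ (σ v).val % 2 = 0

/-! Everything is degree counting. The mismatch degree of a vertex `x` lies between
`|deg_H x - deg_G (π⁻¹ x)|` and `deg_H x + deg_G (π⁻¹ x)`. In `Ĥ_k` an original vertex has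
degree `3 + 5 = 8` (even) or `3 + 12 = 15` (odd), whereas in `Ĝ_k` a leaf has degree `1` and a
vertex of `A` degree `8`; since `8 - 1` and `15 - 8` exceed `6`, the first two claims follow.
If `π` extends `σ` leaf by leaf, every pendant edge is matched, so the mismatch graph of `π` is
that of `σ` placed on `V(H_k)`, whose degrees are at most `3 + 3` as `G_k` and `H_k` are cubic. -/

section Mismatch

variable {V W : Type*} (G : SimpleGraph V) (H : SimpleGraph W) (π : V ≃ W)

lemma map_equiv_adj {x y : W} :
    (G.map π.toEmbedding).Adj x y ↔ G.Adj (π.symm x) (π.symm y) := by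
  rw [← comap_symm, comap_adj]; rfl

lemma ncard_neighborSet_map_equiv (x : W) :
    ((G.map π.toEmbedding).neighborSet x).ncard = (G.neighborSet (π.symm x)).ncard := by
  rw [← comap_symm, neighborSet_comap, Equiv.coe_toEmbedding,
    Set.ncard_preimage_of_injective_subset_range π.symm.injective (by simp)]

lemma mismatchGraph_adj {x y : W} :
    (mismatchGraph G H π).Adj x y ↔
      G.Adj (π.symm x) (π.symm y) ∧ ¬ H.Adj x y ∨ H.Adj x y ∧ ¬ G.Adj (π.symm x) (π.symm y) := by
  rw [mismatchGraph, symmDiff_def, sup_adj, sdiff_adj, sdiff_adj, map_equiv_adj]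

lemma neighborSet_mismatchGraph (x : W) :
    (mismatchGraph G H π).neighborSet x =
      symmDiff ((G.map π.toEmbedding).neighborSet x) (H.neighborSet x) := by
  rw [mismatchGraph, symmDiff_def, symmDiff_def, neighborSet_sup, neighborSet_sdiff,
    neighborSet_sdiff]
  rfl

variable [Finite W]

lemma ncard_neighborSet_sub_le_mismatchDeg (x : W) :
    (H.neighborSet x).ncard - (G.neighborSet (π.symm x)).ncard ≤ mismatchDeg G H π x := by
  rw [← ncard_neighborSet_map_equiv, mismatchDeg, neighborSet_mismatchGraph]
  exact (Set.le_ncard_sdiff _ _).trans (Set.ncard_le_ncard Set.subset_union_right)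

lemma mismatchDeg_le_ncard_add (x : W) :
    mismatchDeg G H π x ≤ (G.neighborSet (π.symm x)).ncard + (H.neighborSet x).ncard := by
  rw [← ncard_neighborSet_map_equiv, mismatchDeg, neighborSet_mismatchGraph]
  exact (Set.ncard_le_ncard symmDiff_le_sup).trans (Set.ncard_union_le _ _)

end Mismatch

section MaximumMismatch

variable {V W : Type*} [Fintype W] (G : SimpleGraph V) (H : SimpleGraph W) (π : V ≃ W)

lemma ncard_neighborSet_sub_le_MMC (x : W) :
    (H.neighborSet x).ncard - (G.neighborSet (π.symm x)).ncard ≤ MMC G H π :=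
  (ncard_neighborSet_sub_le_mismatchDeg G H π x).trans (Finset.le_sup (Finset.mem_univ x))

lemma MMC_le_add {a b : ℕ} (hG : ∀ v, (G.neighborSet v).ncard ≤ a)
    (hH : ∀ w, (H.neighborSet w).ncard ≤ b) : MMC G H π ≤ a + b :=
  Finset.sup_le fun x _ => (mismatchDeg_le_ncard_add G H π x).trans (add_le_add (hG _) (hH x))

end MaximumMismatch

section HatGraph

variable {V : Type*} (G : SimpleGraph V) (P : V → Prop) [DecidablePred P]

@[simp]
lemma hatGraph_adj_inl_inl {u v : V} :
    (hatGraph G P).Adj (Sum.inl u) (Sum.inl v) ↔ G.Adj u v := by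
  simp only [hatGraph, fromRel_adj, ne_eq, Sum.inl.injEq]
  exact ⟨fun h => h.2.elim id .symm, fun h => ⟨h.ne, Or.inl h⟩⟩

@[simp]
lemma hatGraph_adj_inl_inr {u : V} {x : Σ v : V, Fin (if P v then 5 else 12)} :
    (hatGraph G P).Adj (Sum.inl u) (Sum.inr x) ↔ u = x.1 := by
  simp [hatGraph]

@[simp]
lemma hatGraph_adj_inr_inl {u : V} {x : Σ v : V, Fin (if P v then 5 else 12)} :
    (hatGraph G P).Adj (Sum.inr x) (Sum.inl u) ↔ u = x.1 := by
  rw [adj_comm, hatGraph_adj_inl_inr]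

@[simp]
lemma not_hatGraph_adj_inr_inr {x y : Σ v : V, Fin (if P v then 5 else 12)} :
    ¬ (hatGraph G P).Adj (Sum.inr x) (Sum.inr y) := by
  simp [hatGraph]

lemma neighborSet_hatGraph_inr (x : Σ v : V, Fin (if P v then 5 else 12)) :
    (hatGraph G P).neighborSet (Sum.inr x) = {Sum.inl x.1} := by
  ext (u | y) <;> simp [eq_comm]

lemma neighborSet_hatGraph_inl (v : V) :
    (hatGraph G P).neighborSet (Sum.inl v) =
      Sum.inl '' G.neighborSet v ∪ Set.range (fun i => Sum.inr ⟨v, i⟩) := by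
  ext (u | ⟨w, i⟩)
  · simp
  · simp only [mem_neighborSet, hatGraph_adj_inl_inr, Set.mem_union, Set.mem_image,
      Set.mem_range, reduceCtorEq, and_false, exists_false, false_or]
    constructor
    · rintro rfl; exact ⟨i, rfl⟩
    · rintro ⟨j, h⟩; cases h; rfl

lemma ncard_neighborSet_hatGraph_inl [Finite V] (v : V) :
    ((hatGraph G P).neighborSet (Sum.inl v)).ncard =
      (G.neighborSet v).ncard + if P v then 5 else 12 := by
  rw [neighborSet_hatGraph_inl, Set.ncard_union_eq (by simp [Set.disjoint_left]),
    Set.ncard_image_of_injective _ Sum.inl_injective]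
  congr 1
  exact (Set.ncard_range_of_injective (Sum.inr_injective.comp sigma_mk_injective)).trans
    (Nat.card_fin _)

end HatGraph

section HatLift

variable {V W : Type*} {G : SimpleGraph V} {H : SimpleGraph W} {P : V → Prop} {Q : W → Prop}
  [DecidablePred P] [DecidablePred Q] {σ : V ≃ W}
  {π : (V ⊕ Σ v : V, Fin (if P v then 5 else 12)) ≃ (W ⊕ Σ w : W, Fin (if Q w then 5 else 12))}

lemma exists_symm_apply_inr_eq (hσ : ∀ v, π (Sum.inl v) = Sum.inl (σ v))
    (hleaf : ∀ v i, ∃ j, π (Sum.inr ⟨v, i⟩) = Sum.inr ⟨σ v, j⟩)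
    (x : Σ w : W, Fin (if Q w then 5 else 12)) :
    ∃ i, π.symm (Sum.inr x) = Sum.inr ⟨σ.symm x.1, i⟩ := by
  obtain ⟨w, j⟩ := x
  obtain ⟨v, rfl⟩ := σ.surjective w
  rw [σ.symm_apply_apply]
  rcases h : π.symm (Sum.inr ⟨σ v, j⟩) with u | ⟨u, i⟩
  · rw [π.symm_apply_eq, hσ] at h
    cases h
  · obtain ⟨j', hj'⟩ := hleaf u i
    rw [π.symm_apply_eq, hj', Sum.inr.injEq, Sigma.mk.inj_iff] at h
    obtain rfl := σ.injective h.1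
    exact ⟨i, rfl⟩

lemma mismatchGraph_hatGraph (hσ : ∀ v, π (Sum.inl v) = Sum.inl (σ v))
    (hleaf : ∀ v i, ∃ j, π (Sum.inr ⟨v, i⟩) = Sum.inr ⟨σ v, j⟩) :
    mismatchGraph (hatGraph G P) (hatGraph H Q) π =
      (mismatchGraph G H σ).map Function.Embedding.inl := by
  have hinl : ∀ w, π.symm (Sum.inl w) = Sum.inl (σ.symm w) := fun w => by
    rw [π.symm_apply_eq, hσ, σ.apply_symm_apply]
  ext (a | x) (b | y)
  · simp [mismatchGraph_adj, hinl]
  · obtain ⟨i, hi⟩ := exists_symm_apply_inr_eq hσ hleaf y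
    simp [mismatchGraph_adj, hinl, hi]
  · obtain ⟨i, hi⟩ := exists_symm_apply_inr_eq hσ hleaf x
    simp [mismatchGraph_adj, hinl, hi]
  · obtain ⟨i, hi⟩ := exists_symm_apply_inr_eq hσ hleaf x
    obtain ⟨j, hj⟩ := exists_symm_apply_inr_eq hσ hleaf y
    simp [mismatchGraph_adj, hi, hj]

lemma MMC_hatGraph [Fintype W] (hσ : ∀ v, π (Sum.inl v) = Sum.inl (σ v))
    (hleaf : ∀ v i, ∃ j, π (Sum.inr ⟨v, i⟩) = Sum.inr ⟨σ v, j⟩) :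
    MMC (hatGraph G P) (hatGraph H Q) π = MMC G H σ := by
  have hdeg : mismatchDeg (hatGraph G P) (hatGraph H Q) π = Sum.elim (mismatchDeg G H σ) 0 := by
    ext (w | x)
    · rw [mismatchDeg, mismatchGraph_hatGraph hσ hleaf, Sum.elim_inl, mismatchDeg,
        ← Function.Embedding.inl_apply, neighborSet_map,
        Set.ncard_image_of_injective _ Function.Embedding.inl.injective]
    · rw [mismatchDeg, mismatchGraph_hatGraph hσ hleaf, Sum.elim_inr, Pi.zero_apply,
        Set.ncard_eq_zero]
      ext y
      simp
  rw [MMC, hdeg, ← Finset.univ_disjSum_univ, Finset.sup_disjSum]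
  simp [MMC]

end HatLift

namespace Hk

def next (k w : ℕ) : ℕ := if w = 2 * k - 1 then 0 else w + 1

def prev (k w : ℕ) : ℕ := if w = 0 then 2 * k - 1 else w - 1

def chord (k w : ℕ) : ℕ :=
  if k % 2 = 0 then (if w % 4 ≤ 1 then w + 2 else w - 2)
  else if w % 4 = 0 then (if w = 2 * k - 2 then 1 else w + 2)
  else if w % 4 = 1 then (if w = 1 then 2 * k - 2 else w - 2)
  else if w % 4 = 2 then w - 2
  else w + 2

variable {k : ℕ}

lemma adj_iff (hk : 2 ≤ k) {w y : Fin (2 * k)} :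
    (Hk k).Adj w y ↔ y.val = next k w ∨ y.val = prev k w ∨ y.val = chord k w := by
  have hw := w.isLt
  have hy := y.isLt
  rw [Hk, fromRel_adj, ne_eq, Fin.ext_iff]
  unfold next prev chord
  constructor
  · rintro ⟨hne, h⟩
    by_cases hpar : k % 2 = 0 <;> simp only [hpar, if_true, if_false] at h ⊢ <;>
      split_ifs <;> omega
  · intro h
    by_cases hpar : k % 2 = 0 <;> simp only [hpar, if_true, if_false] at h ⊢ <;>
      obtain h | h | h := h <;> split_ifs at h <;>
        first
          | exact ⟨by omega, Or.inl (by omega)⟩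
          | exact ⟨by omega, Or.inr (by omega)⟩

lemma ncard_neighborSet (hk : 2 ≤ k) (w : Fin (2 * k)) : ((Hk k).neighborSet w).ncard = 3 := by
  have hw := w.isLt
  have hne : next k w ≠ prev k w ∧ next k w ≠ chord k w ∧ prev k w ≠ chord k w := by
    unfold next prev chord
    split_ifs <;> omega
  rw [Set.ncard_eq_three]
  refine ⟨⟨next k w, by unfold next; split_ifs <;> omega⟩,
    ⟨prev k w, by unfold prev; split_ifs <;> omega⟩,
    ⟨chord k w, by unfold chord; split_ifs <;> omega⟩,
    by simpa [Fin.ext_iff] using hne.1, by simpa [Fin.ext_iff] using hne.2.1,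
    by simpa [Fin.ext_iff] using hne.2.2, ?_⟩
  ext y
  simp [adj_iff hk, Fin.ext_iff]

end Hk

theorem statement_6_general {V : Type*} [Fintype V] [DecidableEq V] (k : ℕ) (hk : 2 ≤ k)
    (G : SimpleGraph V) [DecidableRel G.Adj] (A : Finset V)
    (hreg : G.IsRegularOfDegree 3)
    (π : (V ⊕ Σ v : V, Fin (if v ∈ A then 5 else 12)) ≃
      (Fin (2 * k) ⊕ Σ w : Fin (2 * k), Fin (if w.val % 2 = 0 then 5 else 12))) :
    (∀ (x : Σ v : V, Fin (if v ∈ A then 5 else 12)) (w : Fin (2 * k)),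
        π (Sum.inr x) = Sum.inl w →
        6 < MMC (hatGraph G (· ∈ A)) (hatGraph (Hk k) (fun w => w.val % 2 = 0)) π) ∧
    (∀ v ∈ A, ∀ w : Fin (2 * k), π (Sum.inl v) = Sum.inl w → w.val % 2 = 1 →
        6 < MMC (hatGraph G (· ∈ A)) (hatGraph (Hk k) (fun w => w.val % 2 = 0)) π) ∧
    (∀ σ : V ≃ Fin (2 * k), (∀ v, π (Sum.inl v) = Sum.inl (σ v)) → InRes k A σ →
      (∀ (v : V) (i : Fin (if v ∈ A then 5 else 12)),
        ∃ j : Fin (if (σ v).val % 2 = 0 then 5 else 12),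
          π (Sum.inr ⟨v, i⟩) = Sum.inr ⟨σ v, j⟩ ∧ (j : ℕ) = (i : ℕ)) →
      MMC (hatGraph G (· ∈ A)) (hatGraph (Hk k) (fun w => w.val % 2 = 0)) π
          = MMC G (Hk k) σ ∧ MMC G (Hk k) σ ≤ 6) := by
  have hdeg (v : V) : (G.neighborSet v).ncard = 3 := by
    rw [← coe_neighborFinset, Set.ncard_coe_finset, card_neighborFinset_eq_degree, hreg v]
  refine ⟨fun x w hx => ?_, fun v hv w hw hodd => ?_, fun σ hσ _ hleaf => ?_⟩
  · have h := ncard_neighborSet_sub_le_MMC (hatGraph G (· ∈ A))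
      (hatGraph (Hk k) (fun w => w.val % 2 = 0)) π (Sum.inl w)
    rw [π.symm_apply_eq.mpr hx.symm, neighborSet_hatGraph_inr, Set.ncard_singleton,
      ncard_neighborSet_hatGraph_inl, Hk.ncard_neighborSet hk] at h
    split_ifs at h <;> omega
  · have h := ncard_neighborSet_sub_le_MMC (hatGraph G (· ∈ A))
      (hatGraph (Hk k) (fun w => w.val % 2 = 0)) π (Sum.inl w)
    rw [π.symm_apply_eq.mpr hw.symm, ncard_neighborSet_hatGraph_inl,
      ncard_neighborSet_hatGraph_inl, Hk.ncard_neighborSet hk, hdeg, if_pos hv,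
      if_neg (by omega)] at h
    omega
  · exact ⟨MMC_hatGraph hσ fun v i => (hleaf v i).imp fun _ h => h.1,
      MMC_le_add G (Hk k) σ (fun v => (hdeg v).le) (fun w => (Hk.ncard_neighborSet hk w).le)⟩

/-- Let `G` be a 3-regular bipartite graph on `2k` vertices (`k ≥ 2`)
with bipartition into independent sets `A`, `B` of size `k`, and let `Ĝ = hatGraph G (· ∈ A)`
and `Ĥ = hatGraph (Hk k) (even)` be the graphs obtained by attaching pendant leaves.
For every bijection `π : V(Ĝ) ≃ V(Ĥ)`:
(1) if a leaf of `Ĝ` is mapped to an original vertex of `H_k`, then `MMC(π) > 6`;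
(2) if a vertex of `A` is mapped to an odd vertex of `H_k`, then `MMC(π) > 6`;
(3) if `π` restricts to `σ : V(G) ≃ V(H_k)` with `σ(A) = Even(2k)`, `σ(B) = Odd(2k)` and
maps each leaf `v^[i]` to `σ(v)^[i]`, then `MMC(π) = MMC(σ) ≤ 6`. -/
theorem statement_6 {V : Type*} [Fintype V] [DecidableEq V] (k : ℕ) (hk : 2 ≤ k)
    (G : SimpleGraph V) [DecidableRel G.Adj] (A B : Finset V)
    (hcard : Fintype.card V = 2 * k) (hA : A.card = k) (hB : B.card = k)
    (hUnion : ∀ v, v ∈ A ∨ v ∈ B) (hDisj : Disjoint A B)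
    (hreg : G.IsRegularOfDegree 3)
    (hAind : ∀ u ∈ A, ∀ v ∈ A, ¬ G.Adj u v) (hBind : ∀ u ∈ B, ∀ v ∈ B, ¬ G.Adj u v)
    (π : (V ⊕ Σ v : V, Fin (if v ∈ A then 5 else 12)) ≃
      (Fin (2 * k) ⊕ Σ w : Fin (2 * k), Fin (if w.val % 2 = 0 then 5 else 12))) :
    (∀ (x : Σ v : V, Fin (if v ∈ A then 5 else 12)) (w : Fin (2 * k)),
        π (Sum.inr x) = Sum.inl w →
        6 < MMC (hatGraph G (· ∈ A)) (hatGraph (Hk k) (fun w => w.val % 2 = 0)) π) ∧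
    (∀ v ∈ A, ∀ w : Fin (2 * k), π (Sum.inl v) = Sum.inl w → w.val % 2 = 1 →
        6 < MMC (hatGraph G (· ∈ A)) (hatGraph (Hk k) (fun w => w.val % 2 = 0)) π) ∧
    (∀ σ : V ≃ Fin (2 * k), (∀ v, π (Sum.inl v) = Sum.inl (σ v)) → InRes k A σ →
      (∀ (v : V) (i : Fin (if v ∈ A then 5 else 12)),
        ∃ j : Fin (if (σ v).val % 2 = 0 then 5 else 12),
          π (Sum.inr ⟨v, i⟩) = Sum.inr ⟨σ v, j⟩ ∧ (j : ℕ) = (i : ℕ)) →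
      MMC (hatGraph G (· ∈ A)) (hatGraph (Hk k) (fun w => w.val % 2 = 0)) π
          = MMC G (Hk k) σ ∧ MMC G (Hk k) σ ≤ 6) :=
  statement_6_general k hk G A hreg π
end

section
/- Let k ≥ 2, let G_k be a 3-regular bipartite graph on 2k vertices with bipartition into independent sets A and B of size k, and let H_k be as constructed. If G_k has a Hamiltonian cycle, then there exists σ ∈ Res(G_k, H_k) such that MMC(σ) ≤ 2, where MMC(σ) is the maximum degree of a vertex of the mismatch graph G_k^σ − H_k. -/
open SimpleGraph

section Aux

def fsucc {n : ℕ} (x : Fin n) : Fin n := ⟨(x.val + 1) % n, Nat.mod_lt _ x.pos⟩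
def fpred {n : ℕ} (x : Fin n) : Fin n := ⟨(x.val + (n - 1)) % n, Nat.mod_lt _ x.pos⟩

lemma fsucc_val {n : ℕ} (x : Fin n) :
    (x.val = n - 1 ∧ (fsucc x).val = 0) ∨ (x.val < n - 1 ∧ (fsucc x).val = x.val + 1) := by
  have hx := x.isLt
  have hpos := x.pos
  rcases eq_or_lt_of_le (Nat.succ_le_of_lt hx) with h | h
  · left
    constructor
    · omega
    · show (x.val + 1) % n = 0
      have : x.val + 1 = n := by omega
      rw [this, Nat.mod_self]
  · right
    constructor
    · omega
    · show (x.val + 1) % n = x.val + 1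
      exact Nat.mod_eq_of_lt h

lemma fpred_val {n : ℕ} (x : Fin n) :
    (x.val = 0 ∧ (fpred x).val = n - 1) ∨ (0 < x.val ∧ (fpred x).val = x.val - 1) := by
  have hx := x.isLt
  have hpos := x.pos
  rcases Nat.eq_zero_or_pos x.val with h | h
  · left
    refine ⟨h, ?_⟩
    show (x.val + (n - 1)) % n = n - 1
    rw [h, Nat.zero_add, Nat.mod_eq_of_lt (by omega)]
  · right
    refine ⟨h, ?_⟩
    show (x.val + (n - 1)) % n = x.val - 1
    have : x.val + (n - 1) = n + (x.val - 1) := by omega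
    rw [this, Nat.add_mod_left, Nat.mod_eq_of_lt (by omega)]

lemma fsucc_fpred {n : ℕ} (x : Fin n) : fsucc (fpred x) = x := by
  have hx := x.isLt
  have hpos := x.pos
  apply Fin.ext
  show ((x.val + (n - 1)) % n + 1) % n = x.val
  rw [Nat.mod_add_mod]
  have : x.val + (n - 1) + 1 = n + x.val := by omega
  rw [this, Nat.add_mod_left, Nat.mod_eq_of_lt hx]

lemma fsucc_ne_fpred {n : ℕ} (hn : 4 ≤ n) (x : Fin n) : fsucc x ≠ fpred x := by
  rw [Fin.ne_iff_vne]
  rcases fsucc_val x with ⟨h1, h2⟩ | ⟨h1, h2⟩ <;> rcases fpred_val x with ⟨h3, h4⟩ | ⟨h3, h4⟩ <;> omega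

lemma hk_adj_fsucc {k : ℕ} (hk : 2 ≤ k) (x : Fin (2 * k)) : (Hk k).Adj x (fsucc x) := by
  have hx := x.isLt
  rw [Hk, SimpleGraph.fromRel_adj]
  rcases fsucc_val x with ⟨h1, h2⟩ | ⟨h1, h2⟩
  · exact ⟨by rw [Fin.ne_iff_vne]; omega, Or.inl (Or.inr (Or.inl ⟨by omega, by omega⟩))⟩
  · exact ⟨by rw [Fin.ne_iff_vne]; omega, Or.inl (Or.inl (by omega))⟩

lemma hk_unique {k : ℕ} (hk : 2 ≤ k) (x y z : Fin (2 * k))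
    (hy : (Hk k).Adj x y) (hz : (Hk k).Adj x z)
    (hy1 : y ≠ fsucc x) (hy2 : y ≠ fpred x) (hz1 : z ≠ fsucc x) (hz2 : z ≠ fpred x) :
    y = z := by
  have hx := x.isLt
  have hyv := y.isLt
  have hzv := z.isLt
  rw [Hk, SimpleGraph.fromRel_adj] at hy hz
  rw [Fin.ne_iff_vne] at hy1 hy2 hz1 hz2
  have hs := fsucc_val x
  have hp := fpred_val x
  rw [Fin.ext_iff]
  by_cases hkp : k % 2 = 0 <;> simp only [if_pos, if_neg, hkp, if_true, if_false, reduceIte] at hy hz <;>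
    [skip; (have hkp' : k % 2 = 1 := by omega)] <;>
  · obtain ⟨hyne, hy⟩ := hy
    obtain ⟨hzne, hz⟩ := hz
    rw [Fin.ne_iff_vne] at hyne hzne
    omega

lemma support_getElem {V : Type*} {G : SimpleGraph V} {u v : V} (p : G.Walk u v) :
    ∀ (i : ℕ) (h : i < p.support.length), p.support[i] = p.getVert i := by
  induction p with
  | nil => intro i h; simp at h; subst h; rfl
  | cons hadj q ih =>
    intro i h
    cases i with
    | zero => rfl
    | succ j =>
      simp only [SimpleGraph.Walk.support_cons, List.getElem_cons_succ,
        SimpleGraph.Walk.getVert_cons_succ]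
      exact ih j (by simpa [SimpleGraph.Walk.support_cons] using h)

lemma cycle_getVert_injOn {V : Type*} {G : SimpleGraph V} {a : V} {p : G.Walk a a}
    (hc : p.IsCycle) {i j : ℕ} (hi1 : 1 ≤ i) (hi2 : i ≤ p.length) (hj1 : 1 ≤ j)
    (hj2 : j ≤ p.length) (h : p.getVert i = p.getVert j) : i = j := by
  have hnd : p.support.tail.Nodup := hc.support_nodup
  have hlen : p.support.length = p.length + 1 := SimpleGraph.Walk.length_support p
  have hlt : p.support.tail.length = p.length := by simp [List.length_tail, hlen]
  have hi : i - 1 < p.support.tail.length := by omega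
  have hj : j - 1 < p.support.tail.length := by omega
  have e1 : p.support.tail[i-1] = p.getVert i := by
    rw [List.getElem_tail, support_getElem p]
    congr 1
    omega
  have e2 : p.support.tail[j-1] = p.getVert j := by
    rw [List.getElem_tail, support_getElem p]
    congr 1
    omega
  have := (hnd.getElem_inj_iff).mp (e1.trans (h.trans e2.symm))
  omega

lemma neighborSet_ncard_eq_degree {V : Type*} [Fintype V] (G : SimpleGraph V)
    [DecidableRel G.Adj] (v : V) : (G.neighborSet v).ncard = G.degree v := by
  rw [Set.ncard_eq_toFinset_card', ← SimpleGraph.neighborFinset_def,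
    SimpleGraph.card_neighborFinset_eq_degree]

end Aux

set_option maxHeartbeats 1000000 in
/-- Let `G` be a 3-regular bipartite graph on `2k` vertices (`k ≥ 2`)
with bipartition into independent sets `A`, `B` of size `k`. If `G` has a Hamiltonian
cycle, then there is some `σ ∈ Res(G, H_k)` with `MMC(σ) ≤ 2`. -/
theorem statement_7 {V : Type*} [Fintype V] [DecidableEq V] (k : ℕ) (hk : 2 ≤ k)
    (G : SimpleGraph V) [DecidableRel G.Adj] (A B : Finset V)
    (hcard : Fintype.card V = 2 * k) (hA : A.card = k) (hB : B.card = k)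
    (hUnion : ∀ v, v ∈ A ∨ v ∈ B) (hDisj : Disjoint A B)
    (hreg : G.IsRegularOfDegree 3)
    (hAind : ∀ u ∈ A, ∀ v ∈ A, ¬ G.Adj u v) (hBind : ∀ u ∈ B, ∀ v ∈ B, ¬ G.Adj u v)
    (hHam : G.IsHamiltonian) :
    ∃ σ : V ≃ Fin (2 * k), InRes k A σ ∧ MMC G (Hk k) σ ≤ 2 := by
  classical
  obtain ⟨a, p, hp⟩ := hHam (by rw [hcard]; omega)
  have hlen : p.length = 2 * k := by rw [hp.length_eq, hcard]
  set q : ℕ → V := p.getVert with hq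
  have hadjq : ∀ m, m < 2 * k → G.Adj (q m) (q (m + 1)) := fun m hm =>
    p.adj_getVert_succ (by omega)
  have hq0 : q (2 * k) = q 0 := by
    rw [hq]
    simp only [← hlen, SimpleGraph.Walk.getVert_length, SimpleGraph.Walk.getVert_zero]
  have hinj : ∀ i j, 1 ≤ i → i ≤ 2 * k → 1 ≤ j → j ≤ 2 * k → q i = q j → i = j :=
    fun i j h1 h2 h3 h4 h5 =>
      cycle_getVert_injOn hp.isCycle h1 (by omega) h3 (by omega) h5
  have halt : ∀ u w, G.Adj u w → (u ∈ A ↔ w ∉ A) := by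
    intro u w huw
    have h1 : ¬(u ∈ A ∧ w ∈ A) := fun ⟨hu, hw⟩ => hAind u hu w hw huw
    have h2 : ¬(u ∉ A ∧ w ∉ A) := fun ⟨hu, hw⟩ =>
      hBind u ((hUnion u).resolve_left hu) w ((hUnion w).resolve_left hw) huw
    tauto
  have hpar : ∀ m, m ≤ 2 * k → (q m ∈ A ↔ (q 0 ∈ A ↔ m % 2 = 0)) := by
    intro m
    induction m with
    | zero => intro _; simp
    | succ m ih =>
      intro hm
      have h1 := ih (by omega)
      have h2 := halt (q m) (q (m + 1)) (hadjq m (by omega))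
      have h3 : (m + 1) % 2 = 0 ↔ ¬(m % 2 = 0) := by omega
      tauto
  set c : ℕ := if q 1 ∈ A then 0 else 1 with hc
  have hc1 : c ≤ 1 := by rw [hc]; split <;> omega
  have hgA : ∀ i : ℕ, i < 2 * k → (q ((i + c) % (2 * k) + 1) ∈ A ↔ i % 2 = 0) := by
    intro i hi
    set m' := (i + c) % (2 * k) with hm'
    have hm'lt : m' < 2 * k := Nat.mod_lt _ (by omega)
    have h1 := hpar (m' + 1) (by omega)
    have h2 := hpar 1 (by omega)
    have hparmod : m' % 2 = (i + c) % 2 := by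
      rw [hm']
      exact Nat.mod_mod_of_dvd _ ⟨k, rfl⟩
    by_cases hq1 : q 1 ∈ A
    · have hc0 : c = 0 := if_pos hq1
      have harith : (m' + 1) % 2 = 0 ↔ ¬(i % 2 = 0) := by omega
      have h2' : ¬ (1 % 2 = 0) := by omega
      tauto
    · have hc0 : c = 1 := if_neg hq1
      have harith : (m' + 1) % 2 = 0 ↔ i % 2 = 0 := by omega
      have h2' : ¬ (1 % 2 = 0) := by omega
      tauto
  set g : Fin (2 * k) → V := fun i => q ((i.val + c) % (2 * k) + 1) with hg
  have hmc : ∀ a : ℕ, a ≤ 2 * k → a % (2 * k) = if a = 2 * k then 0 else a := by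
    intro a ha
    split
    · next h => rw [h, Nat.mod_self]
    · next h => exact Nat.mod_eq_of_lt (by omega)
  have hginj : Function.Injective g := by
    intro i j hij
    have hi := i.isLt
    have hj := j.isLt
    have h := hinj ((i.val + c) % (2 * k) + 1) ((j.val + c) % (2 * k) + 1)
      (by omega) (by have := Nat.mod_lt (i.val + c) (y := 2 * k) (by omega); omega)
      (by omega) (by have := Nat.mod_lt (j.val + c) (y := 2 * k) (by omega); omega) hij
    rw [hmc _ (by omega), hmc _ (by omega)] at h
    apply Fin.ext
    split_ifs at h <;> omega
  have hgbij : Function.Bijective g :=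
    (Fintype.bijective_iff_injective_and_card g).mpr ⟨hginj, by simp [hcard]⟩
  set E : Fin (2 * k) ≃ V := Equiv.ofBijective g hgbij with hE
  have hEg : ∀ i, E i = g i := fun i => rfl
  refine ⟨E.symm, ?_, ?_⟩
  · -- InRes
    intro v
    have h2 := hgA (E.symm v).val (E.symm v).isLt
    rwa [show q (((E.symm v).val + c) % (2 * k) + 1) = v from E.apply_symm_apply v] at h2
  · -- MMC ≤ 2
    have hGcyc : ∀ x : Fin (2 * k), (G.map E.symm.toEmbedding).Adj x (fsucc x) := by
      intro x
      rw [SimpleGraph.map_adj]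
      refine ⟨g x, g (fsucc x), ?_, ?_, ?_⟩
      · show G.Adj (q ((x.val + c) % (2 * k) + 1)) (q (((fsucc x).val + c) % (2 * k) + 1))
        have h1 : (fsucc x).val = (x.val + 1) % (2 * k) := rfl
        set m := (x.val + c) % (2 * k) with hm
        have hmlt : m < 2 * k := Nat.mod_lt _ (by omega)
        have e : ((x.val + 1) % (2 * k) + c) % (2 * k) = (m + 1) % (2 * k) := by
          rw [hm, Nat.mod_add_mod, Nat.mod_add_mod]
          congr 1
          omega
        rw [h1, e]
        rcases eq_or_lt_of_le (show m + 1 ≤ 2 * k by omega) with he | hlt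
        · rw [he, Nat.mod_self, hq0]
          exact hadjq 0 (by omega)
        · rw [Nat.mod_eq_of_lt hlt]
          exact hadjq (m + 1) hlt
      · show E.symm (g x) = x
        rw [← hEg, E.symm_apply_apply]
      · show E.symm (g (fsucc x)) = fsucc x
        rw [← hEg, E.symm_apply_apply]
    have hGcyc' : ∀ x : Fin (2 * k), (G.map E.symm.toEmbedding).Adj x (fpred x) := by
      intro x
      have := hGcyc (fpred x)
      rw [fsucc_fpred] at this
      exact this.symm
    have hHcyc : ∀ x : Fin (2 * k), (Hk k).Adj x (fsucc x) := hk_adj_fsucc hk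
    have hHcyc' : ∀ x : Fin (2 * k), (Hk k).Adj x (fpred x) := by
      intro x
      have := hk_adj_fsucc hk (fpred x)
      rw [fsucc_fpred] at this
      exact this.symm
    have hG3 : ∀ x : Fin (2 * k), ((G.map E.symm.toEmbedding).neighborSet x).ncard = 3 := by
      intro x
      have himg : (G.map E.symm.toEmbedding).neighborSet x
          = E.symm '' (G.neighborSet (E x)) := by
        ext y
        simp only [SimpleGraph.mem_neighborSet, SimpleGraph.map_adj, Set.mem_image]
        constructor
        · rintro ⟨u, w, huw, hu, hw⟩
          refine ⟨w, ?_, hw⟩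
          have : u = E x := by
            have : E.symm u = x := hu
            rw [← this, E.apply_symm_apply]
          rwa [this] at huw
        · rintro ⟨w, hw, hwy⟩
          exact ⟨E x, w, hw, E.symm_apply_apply x, hwy⟩
      rw [himg, Set.ncard_image_of_injective _ E.symm.injective,
        neighborSet_ncard_eq_degree, hreg]
    -- main bound
    have hbound : ∀ x : Fin (2 * k), mismatchDeg G (Hk k) E.symm x ≤ 2 := by
      intro x
      have hsp : fsucc x ≠ fpred x := fsucc_ne_fpred (by omega) x
      set NG := (G.map E.symm.toEmbedding).neighborSet x with hNG
      set NH := (Hk k).neighborSet x with hNH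
      have hNeq : (mismatchGraph G (Hk k) E.symm).neighborSet x = (NG \ NH) ∪ (NH \ NG) := by
        ext y
        simp only [mismatchGraph, SimpleGraph.mem_neighborSet, symmDiff_def,
          SimpleGraph.sup_adj, SimpleGraph.sdiff_adj, Set.mem_union, Set.mem_diff, hNG, hNH,
          SimpleGraph.mem_neighborSet]
      have hpairG : ({fsucc x, fpred x} : Set (Fin (2 * k))) ⊆ NG := by
        rintro y (rfl | rfl)
        · exact hGcyc x
        · exact hGcyc' x
      have hpairH : ({fsucc x, fpred x} : Set (Fin (2 * k))) ⊆ NH := by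
        rintro y (rfl | rfl)
        · exact hHcyc x
        · exact hHcyc' x
      have h1 : (NG \ NH).ncard ≤ 1 := by
        have hsub : NG \ NH ⊆ NG \ {fsucc x, fpred x} := Set.diff_subset_diff_right hpairH
        have := Set.ncard_le_ncard hsub (Set.toFinite _)
        rw [Set.ncard_diff hpairG (Set.toFinite _), hG3 x, Set.ncard_pair hsp] at this
        omega
      have h2 : (NH \ NG).ncard ≤ 1 := by
        have hsub : NH \ NG ⊆ NH \ {fsucc x, fpred x} := Set.diff_subset_diff_right hpairG
        have hss : (NH \ {fsucc x, fpred x}).Subsingleton := by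
          rintro y ⟨hy1, hy2⟩ z ⟨hz1, hz2⟩
          simp only [Set.mem_insert_iff, Set.mem_singleton_iff, not_or] at hy2 hz2
          exact hk_unique hk x y z hy1 hz1 hy2.1 hy2.2 hz2.1 hz2.2
        have := Set.ncard_le_ncard hsub (Set.toFinite _)
        rcases hss.eq_empty_or_singleton with h | ⟨w, h⟩
        · rw [h, Set.ncard_empty] at this
          omega
        · rw [h, Set.ncard_singleton] at this
          exact this
      calc mismatchDeg G (Hk k) E.symm x
          = ((NG \ NH) ∪ (NH \ NG)).ncard := by rw [mismatchDeg, hNeq]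
        _ ≤ (NG \ NH).ncard + (NH \ NG).ncard := Set.ncard_union_le _ _
        _ ≤ 2 := by omega
    exact Finset.sup_le fun x _ => hbound x
end

section
/- Let k ≥ 2 be even, let G_k be a 3-regular bipartite graph on 2k vertices with bipartition into independent sets A and B of size k, let H_k be as constructed, and let σ ∈ Res(G_k, H_k). Then in the mismatch graph G_k^σ − H_k: every vertex is adjacent to exactly one other vertex of the same parity, and that edge is negative; and every vertex has degree equal to 2, 4 or 6. -/
open SimpleGraph

section Aux

/-- next vertex on the cycle -/
def nextv (n x : ℕ) : ℕ := if x + 1 = n then 0 else x + 1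

/-- previous vertex on the cycle -/
def prevv (n x : ℕ) : ℕ := if x = 0 then n - 1 else x - 1

/-- the chord partner -/
def chordv (x : ℕ) : ℕ := if x % 4 < 2 then x + 2 else x - 2

lemma arith_adj (n x y : ℕ) (hn4 : n % 4 = 0) (hn : 4 ≤ n) (hx : x < n) (hy : y < n) :
    (x ≠ y ∧
      ((y = x + 1 ∨ (x = n - 1 ∧ y = 0) ∨ ((x % 4 = 0 ∨ x % 4 = 1) ∧ y = x + 2)) ∨
       (x = y + 1 ∨ (y = n - 1 ∧ x = 0) ∨ ((y % 4 = 0 ∨ y % 4 = 1) ∧ x = y + 2)))) ↔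
    (y = nextv n x ∨ y = prevv n x ∨ y = chordv x) := by
  unfold nextv prevv chordv
  split_ifs <;> omega

lemma nextv_lt (n x : ℕ) (hn : 4 ≤ n) (hx : x < n) : nextv n x < n := by
  unfold nextv; split_ifs <;> omega

lemma prevv_lt (n x : ℕ) (hn : 4 ≤ n) (hx : x < n) : prevv n x < n := by
  unfold prevv; split_ifs <;> omega

lemma chordv_lt (n x : ℕ) (hn4 : n % 4 = 0) (hn : 4 ≤ n) (hx : x < n) : chordv x < n := by
  unfold chordv; split_ifs <;> omega

lemma chordv_parity (x : ℕ) : chordv x % 2 = x % 2 := by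
  unfold chordv; split_ifs <;> omega

lemma nextv_parity (n x : ℕ) (hn4 : n % 4 = 0) (hn : 4 ≤ n) (hx : x < n) :
    nextv n x % 2 ≠ x % 2 := by
  unfold nextv; split_ifs <;> omega

lemma prevv_parity (n x : ℕ) (hn4 : n % 4 = 0) (hn : 4 ≤ n) (hx : x < n) :
    prevv n x % 2 ≠ x % 2 := by
  unfold prevv; split_ifs <;> omega

lemma distinct_nbrs (n x : ℕ) (hn4 : n % 4 = 0) (hn : 4 ≤ n) (hx : x < n) :
    nextv n x ≠ prevv n x ∧ nextv n x ≠ chordv x ∧ prevv n x ≠ chordv x ∧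
    chordv x ≠ x := by
  unfold nextv prevv chordv; split_ifs <;> omega

/-- Adjacency in `Hk` for even `k`, in terms of `nextv`, `prevv`, `chordv`. -/
lemma hk_adj_iff {k : ℕ} (hke : k % 2 = 0) (hk2 : 2 ≤ k) (x y : Fin (2 * k)) :
    (Hk k).Adj x y ↔
      (y.val = nextv (2 * k) x.val ∨ y.val = prevv (2 * k) x.val ∨
        y.val = chordv x.val) := by
  rw [Hk, SimpleGraph.fromRel_adj, if_pos hke, if_pos hke]
  rw [← arith_adj (2 * k) x.val y.val (by omega) (by omega) x.isLt y.isLt]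
  rw [ne_eq, Fin.ext_iff]

end Aux

/-- Let `k ≥ 2` be even, `G` a 3-regular bipartite graph on `2k`
vertices with bipartition into independent sets `A, B` of size `k`, and `σ ∈ Res(G, H_k)`.
In the mismatch graph `G^σ − H_k`, every vertex is adjacent to exactly one other vertex of
the same parity, every edge joining two vertices of the same parity is negative, and every
vertex has degree `2`, `4` or `6`. -/
theorem statement_10 {V : Type*} [Fintype V] [DecidableEq V] (k : ℕ) (hk : 2 ≤ k)
    (hkEven : Even k)
    (G : SimpleGraph V) [DecidableRel G.Adj] (A B : Finset V)
    (hcard : Fintype.card V = 2 * k) (hA : A.card = k) (hB : B.card = k)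
    (hUnion : ∀ v, v ∈ A ∨ v ∈ B) (hDisj : Disjoint A B)
    (hreg : G.IsRegularOfDegree 3)
    (hAind : ∀ u ∈ A, ∀ v ∈ A, ¬ G.Adj u v) (hBind : ∀ u ∈ B, ∀ v ∈ B, ¬ G.Adj u v)
    (σ : V ≃ Fin (2 * k)) (hσ : InRes k A σ) :
    ∀ x : Fin (2 * k),
      (∃! y : Fin (2 * k), (mismatchGraph G (Hk k) σ).Adj x y ∧ y.val % 2 = x.val % 2) ∧
      (∀ y : Fin (2 * k), (mismatchGraph G (Hk k) σ).Adj x y → y.val % 2 = x.val % 2 →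
        (Hk k).Adj x y ∧ ¬ (G.map σ.toEmbedding).Adj x y) ∧
      (mismatchDeg G (Hk k) σ x = 2 ∨ mismatchDeg G (Hk k) σ x = 4 ∨
        mismatchDeg G (Hk k) σ x = 6) := by
  classical
  have hke : k % 2 = 0 := Nat.even_iff.mp hkEven
  have hn4 : (2 * k) % 4 = 0 := by omega
  have hn : 4 ≤ 2 * k := by omega
  set G' := G.map σ.toEmbedding with hG'
  -- adjacency in the mapped graph
  have hmapadj : ∀ x y : Fin (2 * k), G'.Adj x y ↔ G.Adj (σ.symm x) (σ.symm y) := by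
    intro x y
    rw [hG', SimpleGraph.map_adj]
    constructor
    · rintro ⟨u, v, h, rfl, rfl⟩; simpa using h
    · intro h
      exact ⟨σ.symm x, σ.symm y, h, by simp, by simp⟩
  -- edges of G' join vertices of opposite parity
  have hcross : ∀ x y : Fin (2 * k), G'.Adj x y → x.val % 2 ≠ y.val % 2 := by
    intro x y hxy
    rw [hmapadj] at hxy
    have hx' : σ (σ.symm x) = x := σ.apply_symm_apply x
    have hy' : σ (σ.symm y) = y := σ.apply_symm_apply y
    have hBpar : ∀ v, v ∈ B → (σ v).val % 2 = 1 := by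
      intro v hv
      have hvA : v ∉ A := fun hA' => (Finset.disjoint_left.mp hDisj hA') hv
      have := (hσ v).not.mp hvA
      omega
    rcases hUnion (σ.symm x) with hu | hu <;> rcases hUnion (σ.symm y) with hv | hv
    · exact absurd hxy (hAind _ hu _ hv)
    · have h1 := (hσ _).mp hu
      have h2 := hBpar _ hv
      rw [hx'] at h1; rw [hy'] at h2; omega
    · have h1 := hBpar _ hu
      have h2 := (hσ _).mp hv
      rw [hx'] at h1; rw [hy'] at h2; omega
    · exact absurd hxy (hBind _ hu _ hv)
  -- mismatch adjacency
  have hmm : ∀ y z : Fin (2 * k), (mismatchGraph G (Hk k) σ).Adj y z ↔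
      (G'.Adj y z ∧ ¬ (Hk k).Adj y z) ∨ ((Hk k).Adj y z ∧ ¬ G'.Adj y z) := by
    intro y z
    have heq : mismatchGraph G (Hk k) σ = symmDiff G' (Hk k) := rfl
    rw [heq, symmDiff_def, SimpleGraph.sup_adj, SimpleGraph.sdiff_adj,
      SimpleGraph.sdiff_adj]
  intro x
  obtain ⟨nf, hnf⟩ : ∃ nf : Fin (2 * k), nf.val = nextv (2 * k) x.val :=
    ⟨⟨_, nextv_lt _ _ hn x.isLt⟩, rfl⟩
  obtain ⟨pf, hpf⟩ : ∃ pf : Fin (2 * k), pf.val = prevv (2 * k) x.val :=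
    ⟨⟨_, prevv_lt _ _ hn x.isLt⟩, rfl⟩
  obtain ⟨c, hcv⟩ : ∃ c : Fin (2 * k), c.val = chordv x.val :=
    ⟨⟨_, chordv_lt _ _ hn4 hn x.isLt⟩, rfl⟩
  have hcpar : c.val % 2 = x.val % 2 := by rw [hcv]; exact chordv_parity x.val
  have hHc : (Hk k).Adj x c :=
    (hk_adj_iff hke hk x c).mpr (Or.inr (Or.inr hcv))
  have hGc : ¬ G'.Adj x c := fun h => hcross x c h hcpar.symm
  have hmmc : (mismatchGraph G (Hk k) σ).Adj x c := (hmm x c).mpr (Or.inr ⟨hHc, hGc⟩)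
  have hnpar := nextv_parity (2 * k) x.val hn4 hn x.isLt
  have hppar := prevv_parity (2 * k) x.val hn4 hn x.isLt
  -- a same-parity mismatch neighbor must be `c`
  have huniq : ∀ y : Fin (2 * k), (mismatchGraph G (Hk k) σ).Adj x y →
      y.val % 2 = x.val % 2 → y = c := by
    intro y hadj hpar
    have hGy : ¬ G'.Adj x y := fun h => hcross x y h hpar.symm
    have hHy : (Hk k).Adj x y := by
      rcases (hmm x y).mp hadj with ⟨h, _⟩ | ⟨h, _⟩
      · exact absurd h hGy
      · exact h
    rcases (hk_adj_iff hke hk x y).mp hHy with h | h | h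
    · omega
    · omega
    · exact Fin.ext (by omega)
  refine ⟨⟨c, ⟨hmmc, hcpar⟩, fun y hy => huniq y hy.1 hy.2⟩, ?_, ?_⟩
  · intro y hadj hpar
    have hGy : ¬ G'.Adj x y := fun h => hcross x y h hpar.symm
    refine ⟨?_, hGy⟩
    rcases (hmm x y).mp hadj with ⟨h, _⟩ | ⟨h, _⟩
    · exact absurd h hGy
    · exact h
  -- degree computation
  have hd := distinct_nbrs (2 * k) x.val hn4 hn x.isLt
  set s := G'.neighborSet x with hs
  set t := (Hk k).neighborSet x with ht
  have hNH : t = {nf, pf, c} := by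
    ext y
    rw [ht, SimpleGraph.mem_neighborSet, hk_adj_iff hke hk]
    simp only [Set.mem_insert_iff, Set.mem_singleton_iff, Fin.ext_iff, hnf, hpf, hcv]
  have htcard : t.ncard = 3 := by
    rw [hNH, Set.ncard_insert_of_notMem (by simp only [Set.mem_insert_iff,
        Set.mem_singleton_iff, Fin.ext_iff]; omega),
      Set.ncard_pair (by rw [ne_eq, Fin.ext_iff]; omega)]
  have hscard : s.ncard = 3 := by
    have himg : s = σ '' (G.neighborSet (σ.symm x)) := by
      ext y
      simp only [hs, SimpleGraph.mem_neighborSet, Set.mem_image, hmapadj]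
      constructor
      · intro h; exact ⟨σ.symm y, h, by simp⟩
      · rintro ⟨a, ha, rfl⟩; simpa using ha
    rw [himg, Set.ncard_image_of_injective _ σ.injective,
      Set.ncard_eq_toFinset_card', ← SimpleGraph.neighborFinset_def]
    exact hreg _
  have hset : (mismatchGraph G (Hk k) σ).neighborSet x = (s \ t) ∪ (t \ s) := by
    ext y
    simp only [SimpleGraph.mem_neighborSet, Set.mem_union, Set.mem_diff, hs, ht]
    exact hmm x y
  have hdisj : Disjoint (s \ t) (t \ s) :=
    Set.disjoint_left.mpr fun a ha hb => ha.2 hb.1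
  have h1 : (s \ t).ncard + (s ∩ t).ncard = s.ncard := by
    rw [← Set.diff_self_inter]
    exact Set.ncard_diff_add_ncard_of_subset Set.inter_subset_left
  have h2 : (t \ s).ncard + (t ∩ s).ncard = t.ncard := by
    rw [← Set.diff_self_inter]
    exact Set.ncard_diff_add_ncard_of_subset Set.inter_subset_left
  have hi : (s ∩ t).ncard = (t ∩ s).ncard := by rw [Set.inter_comm]
  have hb : (s ∩ t).ncard ≤ 2 := by
    have hsub : s ∩ t ⊆ t \ {c} := by
      rintro a ⟨has, hat⟩
      exact ⟨hat, fun h => hGc (Set.mem_singleton_iff.mp h ▸ has)⟩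
    have hle : (s ∩ t).ncard ≤ (t \ {c}).ncard :=
      Set.ncard_le_ncard hsub (Set.toFinite _)
    have hct : c ∈ t := by rw [ht]; exact hHc
    rw [Set.ncard_diff_singleton_of_mem hct] at hle
    omega
  have hdeg : mismatchDeg G (Hk k) σ x = (s \ t).ncard + (t \ s).ncard := by
    rw [mismatchDeg, hset, Set.ncard_union_eq hdisj]
  omega
end

section
/- Let k ≥ 2, let G_k be a 3-regular bipartite graph on 2k vertices with bipartition into independent sets A and B of size k, let H_k be as constructed, and let σ ∈ Res(G_k, H_k). Let A(σ) be the signed adjacency matrix of the mismatch graph G_k^σ − H_k (entries +1 on positive edges, −1 on negative edges, 0 otherwise). If G_k^σ − H_k has a vertex of degree at least 4, then the spectral (ℓ_2-operator) norms satisfy ‖A(σ)²‖₂ = ‖A(σ)‖₂² > 4. -/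
open SimpleGraph

/-!
Both `G^σ` and `H_k` are 3-regular, so `A(σ) = A(G^σ) - A(H_k)` is a symmetric matrix that
kills the all-ones vector `𝟙`. For a real symmetric matrix the C⋆-identity gives
`‖A²‖₂ = ‖Aᵀ A‖₂ = ‖A‖₂²`. The squared norm of the column of `A(σ)` at `x` is the degree `d`
of `x` in `G^σ − H_k`. Testing `A(σ)` on `u = 𝟙 - n e_x` with `n = 2k` gives `A(σ) u = -n A(σ) e_x`,
so `n² d = ‖A(σ) u‖² ≤ ‖A(σ)‖₂² (n² - n)` and hence `‖A(σ)‖₂² > d ≥ 4`.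
-/

open Matrix
open scoped Matrix.Norms.L2Operator

section L2OpNorm

variable {n : Type*} [Fintype n]

lemma lpNorm_two_eq_norm (x : n → ℝ) : lpNorm 2 x = ‖(WithLp.toLp 2 x : EuclideanSpace ℝ n)‖ := by
  rw [lpNorm, EuclideanSpace.norm_eq, Real.sqrt_eq_rpow]
  simp

variable [DecidableEq n]

lemma lpOpNorm_two_eq_l2_opNorm (M : Matrix n n ℝ) : lpOpNorm 2 M = ‖M‖ := by
  rcases isEmpty_or_nonempty n with hn | hn
  · have : IsEmpty {x : n → ℝ // x ≠ 0} := ⟨fun x => x.2 (Subsingleton.elim _ _)⟩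
    rw [lpOpNorm, Real.iSup_of_isEmpty, Subsingleton.elim M 0, norm_zero]
  have : Nonempty {x : n → ℝ // x ≠ 0} := ⟨⟨1, one_ne_zero⟩⟩
  have hratio (x : n → ℝ) : lpNorm 2 (M *ᵥ x) / lpNorm 2 x =
      ‖toEuclideanCLM (𝕜 := ℝ) M (WithLp.toLp 2 x)‖ / ‖(WithLp.toLp 2 x : EuclideanSpace ℝ n)‖ := by
    simp [lpNorm_two_eq_norm]
  have hbdd (x : n → ℝ) : lpNorm 2 (M *ᵥ x) / lpNorm 2 x ≤ ‖M‖ :=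
    (hratio x).trans_le (ContinuousLinearMap.ratio_le_opNorm _ _)
  refine le_antisymm (ciSup_le fun x => hbdd x) ?_
  rw [← l2_opNorm_toEuclideanCLM]
  refine ContinuousLinearMap.opNorm_le_bound _ (Real.iSup_nonneg fun x => by
    rw [hratio]; positivity) fun x => ?_
  rcases eq_or_ne x 0 with rfl | hx
  · simp
  rw [← div_le_iff₀ (norm_pos_iff.2 hx)]
  calc ‖toEuclideanCLM (𝕜 := ℝ) M x‖ / ‖x‖
      = lpNorm 2 (M *ᵥ WithLp.ofLp x) / lpNorm 2 (WithLp.ofLp x) := by simp [hratio]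
    _ ≤ lpOpNorm 2 M :=
      le_ciSup (f := fun x : {x : n → ℝ // x ≠ 0} => lpNorm 2 (M *ᵥ x.1) / lpNorm 2 x.1)
        ⟨‖M‖, Set.forall_mem_range.2 fun x => hbdd x.1⟩ ⟨WithLp.ofLp x, by simpa using hx⟩

lemma lpOpNorm_two_mul_self_of_isSymm {M : Matrix n n ℝ} (hM : M.IsSymm) :
    lpOpNorm 2 (M * M) = lpOpNorm 2 M ^ 2 := by
  rw [lpOpNorm_two_eq_l2_opNorm, lpOpNorm_two_eq_l2_opNorm, sq,
    ← l2_opNorm_conjTranspose_mul_self, conjTranspose_eq_transpose_of_trivial, hM.eq]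

lemma sum_sq_lt_l2_opNorm_sq_of_mulVec_one_eq_zero {M : Matrix n n ℝ} (hM : M *ᵥ 1 = 0)
    {j : n} (hj : 0 < ∑ i, M i j ^ 2) : ∑ i, M i j ^ 2 < ‖M‖ ^ 2 := by
  set N : ℝ := (Fintype.card n : ℝ)
  set u : n → ℝ := 1 - N • Pi.single j 1
  have hMu : M *ᵥ u = -N • fun i => M i j := by
    ext i
    simp [u, Matrix.mulVec_sub, Matrix.mulVec_smul, hM]
  have hu : ‖(WithLp.toLp 2 u : EuclideanSpace ℝ n)‖ ^ 2 = N ^ 2 - N := by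
    rw [EuclideanSpace.real_norm_sq_eq]
    simp [u, N, Pi.single_apply, sub_sq, Finset.sum_add_distrib, Finset.sum_sub_distrib]
    ring
  have hMu' : ‖(WithLp.toLp 2 (M *ᵥ u) : EuclideanSpace ℝ n)‖ ^ 2 = N ^ 2 * ∑ i, M i j ^ 2 := by
    rw [EuclideanSpace.real_norm_sq_eq, hMu, Finset.mul_sum]
    simp [mul_pow]
  have hle := l2_opNorm_mulVec M (WithLp.toLp 2 u)
  have hN : 1 ≤ N := Nat.one_le_cast.2 (Fintype.card_pos_iff.2 ⟨j⟩)
  have hsq : N ^ 2 * ∑ i, M i j ^ 2 ≤ ‖M‖ ^ 2 * (N ^ 2 - N) := by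
    rw [← hu, ← hMu', ← mul_pow]
    exact pow_le_pow_left₀ (norm_nonneg _) hle 2
  by_contra! h
  nlinarith [mul_le_mul_of_nonneg_right h (by nlinarith : (0 : ℝ) ≤ N ^ 2 - N)]

end L2OpNorm

namespace SimpleGraph

variable {V W : Type*}

lemma map_equiv_adj_iff (G : SimpleGraph V) (e : V ≃ W) {x y : W} :
    (G.map e.toEmbedding).Adj x y ↔ G.Adj (e.symm x) (e.symm y) := by
  rw [← comap_symm, comap_adj]; rfl

lemma IsRegularOfDegree.map_equiv [Fintype V] [Fintype W] {G : SimpleGraph V} [DecidableRel G.Adj]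
    {d : ℕ} (h : G.IsRegularOfDegree d) (e : V ≃ W) [DecidableRel (G.map e.toEmbedding).Adj] :
    (G.map e.toEmbedding).IsRegularOfDegree d := fun x => by
  rw [← card_neighborSet_eq_degree, ← h (e.symm x), ← card_neighborSet_eq_degree]
  exact Fintype.card_congr (e.symm.subtypeEquiv fun _ => G.map_equiv_adj_iff e)

end SimpleGraph

section SignedAdj

variable {V W : Type*} (G : SimpleGraph V) (H : SimpleGraph W) (π : V ≃ W)

lemma signedAdj_eq_adjMatrix_sub [DecidableRel (G.map π.toEmbedding).Adj] [DecidableRel H.Adj] :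
    signedAdj G H π = (G.map π.toEmbedding).adjMatrix ℝ - H.adjMatrix ℝ := by
  ext x y
  simp only [signedAdj, Matrix.sub_apply, adjMatrix_apply]
  split_ifs <;> simp_all

lemma isSymm_signedAdj : (signedAdj G H π).IsSymm := by
  classical
  rw [signedAdj_eq_adjMatrix_sub]
  exact (isSymm_adjMatrix _).sub (isSymm_adjMatrix _)

lemma signedAdj_mulVec_one [Fintype V] [Fintype W] [DecidableRel G.Adj] [DecidableRel H.Adj]
    {d : ℕ} (hG : G.IsRegularOfDegree d) (hH : H.IsRegularOfDegree d) :
    signedAdj G H π *ᵥ 1 = 0 := by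
  classical
  ext x
  rw [signedAdj_eq_adjMatrix_sub, Matrix.sub_mulVec, Pi.sub_apply, ← Function.const_one,
    adjMatrix_mulVec_const_apply_of_regular (hG.map_equiv π),
    adjMatrix_mulVec_const_apply_of_regular hH, sub_self, Pi.zero_apply]

lemma sum_signedAdj_sq [Fintype W] (x : W) :
    ∑ y, signedAdj G H π x y ^ 2 = mismatchDeg G H π x := by
  classical
  have hsq (y : W) : signedAdj G H π x y ^ 2 = if (mismatchGraph G H π).Adj x y then 1 else 0 := by
    simp only [signedAdj, mismatchGraph, symmDiff_def, sup_adj, sdiff_adj]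
    split_ifs <;> norm_num <;> tauto
  rw [Finset.sum_congr rfl fun y _ => hsq y, Finset.sum_boole, mismatchDeg,
    ← Set.ncard_coe_finset]
  congr
  ext
  simp

end SignedAdj

-- The chords of `H_k` form a perfect matching; `hkChord k x` is the partner of `x`.
def hkChord (k x : ℕ) : ℕ :=
  if k % 2 = 0 then (if x % 4 ≤ 1 then x + 2 else x - 2)
  else if x = 1 then 2 * k - 2 else if x = 2 * k - 2 then 1
  else if x % 4 = 0 ∨ x % 4 = 3 then x + 2 else x - 2

lemma Hk_adj_iff {k : ℕ} (hk : 2 ≤ k) (x y : Fin (2 * k)) :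
    (Hk k).Adj x y ↔ y.val = (if x.val = 2 * k - 1 then 0 else x.val + 1) ∨
      x.val = (if y.val = 2 * k - 1 then 0 else y.val + 1) ∨ y.val = hkChord k x.val := by
  have hx := x.isLt
  have hy := y.isLt
  simp only [Hk, SimpleGraph.fromRel_adj, ne_eq, Fin.ext_iff, hkChord]
  constructor
  · rintro ⟨-, h | h⟩ <;> split_ifs at h ⊢ <;> omega
  · have : x.val % 4 = 0 ∨ x.val % 4 = 1 ∨ x.val % 4 = 2 ∨ x.val % 4 = 3 := by omega
    rintro (h | h | h) <;> refine ⟨by split_ifs at h <;> omega, ?_⟩ <;>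
      rcases this with h4 | h4 | h4 | h4 <;> split_ifs at h ⊢ <;>
      first | exact Or.inl (by omega) | exact Or.inr (by omega)

lemma hkChord_lt {k x : ℕ} (hk : 2 ≤ k) (hx : x < 2 * k) : hkChord k x < 2 * k := by
  unfold hkChord
  split_ifs <;> omega

lemma Hk_isRegularOfDegree {k : ℕ} (hk : 2 ≤ k) [DecidableRel (Hk k).Adj] :
    (Hk k).IsRegularOfDegree 3 := fun x => by
  have hx := x.isLt
  rw [← card_neighborFinset_eq_degree, Finset.card_eq_three]
  have hy (y : Fin (2 * k)) : x.val = (if y.val = 2 * k - 1 then 0 else y.val + 1) ↔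
      y.val = if x.val = 0 then 2 * k - 1 else x.val - 1 := by
    have := y.isLt
    split_ifs <;> omega
  refine ⟨⟨if x.val = 2 * k - 1 then 0 else x.val + 1, by split_ifs <;> omega⟩,
    ⟨if x.val = 0 then 2 * k - 1 else x.val - 1, by split_ifs <;> omega⟩,
    ⟨hkChord k x.val, hkChord_lt hk hx⟩, ?_, ?_, ?_,
    Finset.ext fun y => by simp [Hk_adj_iff hk, hy, Fin.ext_iff]⟩ <;>
  simp only [ne_eq, Fin.mk.injEq, hkChord] <;> split_ifs <;> omega

theorem statement_14_general {V : Type*} [Fintype V] (k : ℕ) (hk : 2 ≤ k)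
    (G : SimpleGraph V) [DecidableRel G.Adj]
    (hreg : G.IsRegularOfDegree 3)
    (σ : V ≃ Fin (2 * k))
    (hdeg : ∃ x : Fin (2 * k), 4 ≤ mismatchDeg G (Hk k) σ x) :
    lpOpNorm 2 (signedAdj G (Hk k) σ * signedAdj G (Hk k) σ)
        = (lpOpNorm 2 (signedAdj G (Hk k) σ)) ^ 2 ∧
      4 < (lpOpNorm 2 (signedAdj G (Hk k) σ)) ^ 2 := by
  classical
  obtain ⟨x, hx⟩ := hdeg
  have hsymm := isSymm_signedAdj G (Hk k) σ
  have hcol : (4 : ℝ) ≤ ∑ i, signedAdj G (Hk k) σ i x ^ 2 := by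
    rw [Fintype.sum_congr _ _ fun i => by rw [hsymm.apply x i], sum_signedAdj_sq]
    exact_mod_cast hx
  refine ⟨lpOpNorm_two_mul_self_of_isSymm hsymm, ?_⟩
  rw [lpOpNorm_two_eq_l2_opNorm]
  exact hcol.trans_lt <| sum_sq_lt_l2_opNorm_sq_of_mulVec_one_eq_zero
    (signedAdj_mulVec_one G (Hk k) σ hreg (Hk_isRegularOfDegree hk)) (by linarith)

/-- Let `k ≥ 2`, `G` a 3-regular bipartite graph on `2k` vertices with
bipartition into independent sets `A, B` of size `k`, and `σ ∈ Res(G, H_k)`. If the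
mismatch graph `G^σ − H_k` has a vertex of degree at least `4`, then the spectral norms of
its signed adjacency matrix `A(σ)` satisfy `‖A(σ)²‖₂ = ‖A(σ)‖₂² > 4`. -/
theorem statement_14 {V : Type*} [Fintype V] [DecidableEq V] (k : ℕ) (hk : 2 ≤ k)
    (G : SimpleGraph V) [DecidableRel G.Adj] (A B : Finset V)
    (hcard : Fintype.card V = 2 * k) (hA : A.card = k) (hB : B.card = k)
    (hUnion : ∀ v, v ∈ A ∨ v ∈ B) (hDisj : Disjoint A B)
    (hreg : G.IsRegularOfDegree 3)
    (hAind : ∀ u ∈ A, ∀ v ∈ A, ¬ G.Adj u v) (hBind : ∀ u ∈ B, ∀ v ∈ B, ¬ G.Adj u v)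
    (σ : V ≃ Fin (2 * k)) (hσ : InRes k A σ)
    (hdeg : ∃ x : Fin (2 * k), 4 ≤ mismatchDeg G (Hk k) σ x) :
    lpOpNorm 2 (signedAdj G (Hk k) σ * signedAdj G (Hk k) σ)
        = (lpOpNorm 2 (signedAdj G (Hk k) σ)) ^ 2 ∧
      4 < (lpOpNorm 2 (signedAdj G (Hk k) σ)) ^ 2 :=
  statement_14_general k hk G hreg σ hdeg
end

section
/- Let G and H both be strongly regular graphs with the same parameters (n, d, λ, ν), where λ ≥ ν. Then G and H are not isomorphic if and only if every bijection π : V(G) → V(H) satisfies MMC(π) ≥ λ − ν + 1. -/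
open SimpleGraph

/-! If `xy` is an edge of `G^π` but not of `H`, every common `G^π`-neighbour of `x` and `y` is
either a common `H`-neighbour (there are `ν` of these) or a positive mismatch neighbour of `x`
other than `y`, or of `y` other than `x`. Hence `λ + 2 ≤ ν + p(x) + p(y)`, where `p` counts
positive mismatch edges. Both graphs being `d`-regular, each vertex meets as many positive as
negative mismatch edges, so its mismatch degree is `2p`, and `x` or `y` has mismatch degree at
least `λ - ν + 2`. Negative edges are handled by exchanging the two graphs. -/

namespace SimpleGraph

variable {V W : Type*}

theorem Iso.image_commonNeighbors {G : SimpleGraph V} {G' : SimpleGraph W} (f : G ≃g G')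
    (v w : V) : f '' G.commonNeighbors v w = G'.commonNeighbors (f v) (f w) := by
  simp only [commonNeighbors_eq, Set.image_inter f.injective, f.image_neighborSet]

theorem ncard_neighborSet_symmDiff [Finite V] (A B : SimpleGraph V) (x : V)
    (h : (A.neighborSet x).ncard = (B.neighborSet x).ncard) :
    ((symmDiff A B).neighborSet x).ncard = 2 * ((A \ B).neighborSet x).ncard := by
  rw [symmDiff_def, neighborSet_sup, neighborSet_sdiff, neighborSet_sdiff,
    Set.ncard_union_eq disjoint_sdiff_sdiff,
    ← (Set.ncard_eq_ncard_iff_ncard_sdiff_eq_ncard_sdiff (Set.toFinite _) (Set.toFinite _)).mp h,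
    two_mul]

variable [Fintype V] [Fintype W] {G : SimpleGraph V} [DecidableRel G.Adj] {n k ℓ μ : ℕ}

theorem IsSRGWith.of_iso {G' : SimpleGraph W} [DecidableRel G'.Adj]
    (h : G.IsSRGWith n k ℓ μ) (f : G ≃g G') : G'.IsSRGWith n k ℓ μ where
  card := (Fintype.card_congr f.toEquiv).symm.trans h.card
  regular v := by
    obtain ⟨v, rfl⟩ := f.surjective v
    rw [← card_neighborSet_eq_degree, ← Fintype.card_congr (f.mapNeighborSet v),
      card_neighborSet_eq_degree, h.regular]
  of_adj v w hvw := by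
    obtain ⟨v, rfl⟩ := f.surjective v
    obtain ⟨w, rfl⟩ := f.surjective w
    rw [← h.of_adj v w (f.map_adj_iff.mp hvw)]
    exact Fintype.card_congr ((Equiv.Set.image f _ f.injective).trans
      (Equiv.setCongr (f.image_commonNeighbors v w))).symm
  of_not_adj v w hne hvw := by
    obtain ⟨v, rfl⟩ := f.surjective v
    obtain ⟨w, rfl⟩ := f.surjective w
    rw [← h.of_not_adj (f.injective.ne_iff.mp hne) (f.map_adj_iff.not.mp hvw)]
    exact Fintype.card_congr ((Equiv.Set.image f _ f.injective).trans
      (Equiv.setCongr (f.image_commonNeighbors v w))).symm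

theorem IsSRGWith.ncard_neighborSet (h : G.IsSRGWith n k ℓ μ) (v : V) :
    (G.neighborSet v).ncard = k := by
  rw [Set.ncard_eq_toFinset_card', Set.toFinset_card, card_neighborSet_eq_degree, h.regular]

theorem IsSRGWith.ncard_commonNeighbors_of_adj (h : G.IsSRGWith n k ℓ μ) {v w : V}
    (hvw : G.Adj v w) : (G.commonNeighbors v w).ncard = ℓ := by
  rw [Set.ncard_eq_toFinset_card', Set.toFinset_card, h.of_adj v w hvw]

theorem IsSRGWith.ncard_commonNeighbors_of_not_adj (h : G.IsSRGWith n k ℓ μ) {v w : V}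
    (hne : v ≠ w) (hvw : ¬G.Adj v w) : (G.commonNeighbors v w).ncard = μ := by
  rw [Set.ncard_eq_toFinset_card', Set.toFinset_card, h.of_not_adj hne hvw]

variable {A B : SimpleGraph W} [DecidableRel A.Adj] [DecidableRel B.Adj] {n' k' ℓ' μ' : ℕ}

theorem IsSRGWith.add_two_le_ncard_neighborSet_sdiff (hA : A.IsSRGWith n k ℓ μ)
    (hB : B.IsSRGWith n' k' ℓ' μ') {x y : W} (hxy : (A \ B).Adj x y) :
    ℓ + 2 ≤ μ' + ((A \ B).neighborSet x).ncard + ((A \ B).neighborSet y).ncard := by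
  have hyx : (A \ B).Adj y x := hxy.symm
  have hsub : A.commonNeighbors x y ⊆ B.commonNeighbors x y ∪
      ((A \ B).neighborSet x \ {y}) ∪ ((A \ B).neighborSet y \ {x}) := by
    rintro z ⟨hxz, hyz⟩
    by_cases hBxz : B.Adj x z
    · by_cases hByz : B.Adj y z
      · exact Or.inl (Or.inl ⟨hBxz, hByz⟩)
      · exact Or.inr ⟨⟨hyz, hByz⟩, hxz.ne'⟩
    · exact Or.inl (Or.inr ⟨⟨hxz, hBxz⟩, hyz.ne'⟩)
  have hcard := calc
    ℓ = (A.commonNeighbors x y).ncard := (hA.ncard_commonNeighbors_of_adj hxy.1).symm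
    _ ≤ (B.commonNeighbors x y ∪ ((A \ B).neighborSet x \ {y}) ∪
          ((A \ B).neighborSet y \ {x})).ncard := Set.ncard_le_ncard hsub (Set.toFinite _)
    _ ≤ (B.commonNeighbors x y).ncard + ((A \ B).neighborSet x \ {y}).ncard +
          ((A \ B).neighborSet y \ {x}).ncard :=
      (Set.ncard_union_le _ _).trans (Nat.add_le_add_right (Set.ncard_union_le _ _) _)
  rw [hB.ncard_commonNeighbors_of_not_adj hxy.ne hxy.2] at hcard
  have hx := Set.ncard_sdiff_singleton_add_one (s := (A \ B).neighborSet x) hxy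
  have hy := Set.ncard_sdiff_singleton_add_one (s := (A \ B).neighborSet y) hyx
  omega

theorem IsSRGWith.two_mul_sub_add_two_le_ncard_neighborSet_symmDiff (hA : A.IsSRGWith n k ℓ μ)
    (hB : B.IsSRGWith n k ℓ μ) {x y : W} (hxy : (symmDiff A B).Adj x y) :
    2 * (ℓ - μ + 2) ≤
      ((symmDiff A B).neighborSet x).ncard + ((symmDiff A B).neighborSet y).ncard := by
  wlog hAB : (A \ B).Adj x y generalizing A B
  · rw [symmDiff_comm] at hxy ⊢
    refine this hB hA hxy ?_
    rw [symmDiff_def] at hxy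
    exact hxy.resolve_right hAB
  have hsum := hA.add_two_le_ncard_neighborSet_sdiff hB hAB
  have hx : 0 < ((A \ B).neighborSet x).ncard := (Set.ncard_pos (Set.toFinite _)).mpr ⟨y, hAB⟩
  have hy : 0 < ((A \ B).neighborSet y).ncard :=
    (Set.ncard_pos (Set.toFinite _)).mpr ⟨x, hAB.symm⟩
  rw [ncard_neighborSet_symmDiff A B x (by rw [hA.ncard_neighborSet, hB.ncard_neighborSet]),
    ncard_neighborSet_symmDiff A B y (by rw [hA.ncard_neighborSet, hB.ncard_neighborSet])]
  omega

end SimpleGraph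

section Mismatch

variable {V W : Type*} {G : SimpleGraph V} {H : SimpleGraph W} {π : V ≃ W}

theorem mismatchGraph_eq_bot_iff :
    mismatchGraph G H π = ⊥ ↔ ∀ u v, H.Adj (π u) (π v) ↔ G.Adj u v := by
  rw [mismatchGraph, symmDiff_eq_bot]
  constructor
  · rintro rfl u v
    exact map_adj_apply
  · intro h
    ext x y
    obtain ⟨u, rfl⟩ := π.surjective x
    obtain ⟨v, rfl⟩ := π.surjective y
    exact map_adj_apply.trans (h u v).symm

theorem mismatchDeg_le_MMC [Fintype W] (x : W) : mismatchDeg G H π x ≤ MMC G H π :=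
  Finset.le_sup (Finset.mem_univ x)

theorem MMC_eq_zero_of_mismatchGraph_eq_bot [Fintype W] (h : mismatchGraph G H π = ⊥) :
    MMC G H π = 0 :=
  Nat.eq_zero_of_le_zero <| Finset.sup_le fun x _ => by simp [mismatchDeg, h]

theorem SimpleGraph.IsSRGWith.two_mul_sub_add_two_le_mismatchDeg [Fintype V] [Fintype W]
    [DecidableRel G.Adj] [DecidableRel H.Adj] {n k ℓ μ : ℕ}
    (hG : G.IsSRGWith n k ℓ μ) (hH : H.IsSRGWith n k ℓ μ) {x y : W}
    (hxy : (mismatchGraph G H π).Adj x y) :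
    2 * (ℓ - μ + 2) ≤ mismatchDeg G H π x + mismatchDeg G H π y := by
  classical
  exact (hG.of_iso (Iso.map π G)).two_mul_sub_add_two_le_ncard_neighborSet_symmDiff hH hxy

end Mismatch

theorem statement_16_general {V W : Type*} [Fintype V] [Fintype W]
    (G : SimpleGraph V) (H : SimpleGraph W) [DecidableRel G.Adj] [DecidableRel H.Adj]
    (n d l ν : ℕ)
    (hG : G.IsSRGWith n d l ν) (hH : H.IsSRGWith n d l ν) :
    (¬ Nonempty (G ≃g H)) ↔ ∀ π : V ≃ W, l - ν + 1 ≤ MMC G H π := by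
  constructor
  · intro hni π
    obtain ⟨x, y, hxy⟩ : ∃ x y, (mismatchGraph G H π).Adj x y := by
      by_contra! h
      exact hni ⟨⟨π, mismatchGraph_eq_bot_iff.mp (eq_bot_iff_forall_not_adj.mpr h) _ _⟩⟩
    have hdeg := hG.two_mul_sub_add_two_le_mismatchDeg hH hxy
    have hx := mismatchDeg_le_MMC (G := G) (H := H) (π := π) x
    have hy := mismatchDeg_le_MMC (G := G) (H := H) (π := π) y
    omega
  · rintro h ⟨e⟩
    have hbot : mismatchGraph G H e.toEquiv = ⊥ :=
      mismatchGraph_eq_bot_iff.mpr fun _ _ => e.map_adj_iff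
    simpa [MMC_eq_zero_of_mismatchGraph_eq_bot hbot] using h e.toEquiv

/-- Let `G` and `H` be strongly regular graphs with the same parameters
`(n, d, l, ν)` with `l ≥ ν`. Then `G` and `H` are not isomorphic if and only if every
bijection `π : V(G) → V(H)` satisfies `MMC(π) ≥ l − ν + 1`. -/
theorem statement_16 {V W : Type*} [Fintype V] [Fintype W]
    (G : SimpleGraph V) (H : SimpleGraph W) [DecidableRel G.Adj] [DecidableRel H.Adj]
    (n d l ν : ℕ) (hlν : ν ≤ l)
    (hG : G.IsSRGWith n d l ν) (hH : H.IsSRGWith n d l ν) :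
    (¬ Nonempty (G ≃g H)) ↔ ∀ π : V ≃ W, l - ν + 1 ≤ MMC G H π :=
  statement_16_general G H n d l ν hG hH
end

section
/- Let Γ be a finite group, and let G and H be the Latin square graphs of the Cayley tables of the groups Γ × ℤ₄ and Γ × (ℤ₂)², respectively, so that each has n = 16|Γ|² vertices. Then there exists a bijection π : V(G) → V(H) with MMC(π) = √n = 4|Γ|. -/
open SimpleGraph

/-- `L` is a Latin square: each symbol occurs exactly once in each row and each column. -/
def IsLatinSquare {A : Type*} (L : A → A → A) : Prop :=
  (∀ a, Function.Bijective (L a)) ∧ (∀ b, Function.Bijective fun a => L a b)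

/-- The Latin square graph of `L`: its vertices are the cells of the array, and two
distinct cells are adjacent iff they lie in the same row, lie in the same column, or
contain the same symbol. -/
def latinSquareGraph {A : Type*} (L : A → A → A) : SimpleGraph (A × A) :=
  SimpleGraph.fromRel (fun c d => c.1 = d.1 ∨ c.2 = d.2 ∨ L c.1 c.2 = L d.1 d.2)

/-- The Latin square graph of the Cayley table of a group `Δ`: vertices are pairs
`(a, b) ∈ Δ²`, and distinct pairs `(a,b)`, `(c,d)` are adjacent iff `a = c`, `b = d`, or
`ab = cd`. -/
def cayleyLatinSquareGraph (Δ : Type*) [Group Δ] : SimpleGraph (Δ × Δ) :=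
  latinSquareGraph (fun a b : Δ => a * b)

/-! The bijection is `id × φ` on rows and on columns, for a bijection `φ : ℤ₄ → ℤ₂²`. It maps
rows to rows and columns to columns, so two cells are mismatched exactly when they share neither
row nor column, have the same product in `Γ`, and their `ℤ₄`-parts have equal product in exactly
one of `ℤ₄` and `ℤ₂²`. The degree of a cell is therefore `|Γ|` times the number of such pairs in
the `4 × 4` tables, and a finite check shows this number is at most `4`, attained at the
identity. -/

lemma mismatchGraph_adj_apply {V W : Type*} (G : SimpleGraph V) (H : SimpleGraph W) (π : V ≃ W)
    (u v : V) :
    (mismatchGraph G H π).Adj (π u) (π v) ↔ Xor (G.Adj u v) (H.Adj (π u) (π v)) := by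
  rw [mismatchGraph, symmDiff_def, sup_adj, sdiff_adj, sdiff_adj, xor_def,
    ← Equiv.coe_toEmbedding, map_adj_apply]

lemma latinSquareGraph_adj {A : Type*} (L : A → A → A) (c d : A × A) :
    (latinSquareGraph L).Adj c d ↔ c ≠ d ∧ (c.1 = d.1 ∨ c.2 = d.2 ∨ L c.1 c.2 = L d.1 d.2) := by
  rw [latinSquareGraph, fromRel_adj, eq_comm (a := d.1), eq_comm (a := d.2),
    eq_comm (a := L d.1 d.2), or_self]

lemma latinSquareGraph_mismatch_adj {A B : Type*} (L : A → A → A) (L' : B → B → B) (σ : A ≃ B)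
    (u v : A × A) :
    (mismatchGraph (latinSquareGraph L) (latinSquareGraph L') (σ.prodCongr σ)).Adj
        (σ.prodCongr σ u) (σ.prodCongr σ v) ↔
      u.1 ≠ v.1 ∧ u.2 ≠ v.2 ∧
        Xor (L u.1 u.2 = L v.1 v.2) (L' (σ u.1) (σ u.2) = L' (σ v.1) (σ v.2)) := by
  rw [mismatchGraph_adj_apply, latinSquareGraph_adj, latinSquareGraph_adj,
    (σ.prodCongr σ).injective.ne_iff]
  simp only [Equiv.prodCongr_apply, Prod.map, σ.injective.eq_iff, xor_def, ne_eq, Prod.ext_iff]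
  tauto

section GroupProduct

variable {Γ K K' : Type*} [Group Γ] [Group K] [Group K']

lemma ne_and_ne_of_xor_mul_eq {φ : K ≃ K'} {a b a' b' : K}
    (h : Xor (a * b = a' * b') (φ a * φ b = φ a' * φ b')) : a ≠ a' ∧ b ≠ b' := by
  constructor <;> rintro rfl <;> simp at h

def productMismatches [Fintype K] [DecidableEq K] [DecidableEq K'] (φ : K ≃ K') (a b : K) :
    Finset (K × K) :=
  Finset.univ.filter fun p => Xor (a * b = p.1 * p.2) (φ a * φ b = φ p.1 * φ p.2)

def prodCellEquiv (Γ : Type*) (φ : K ≃ K') : (Γ × K) × (Γ × K) ≃ (Γ × K') × (Γ × K') :=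
  ((Equiv.refl Γ).prodCongr φ).prodCongr ((Equiv.refl Γ).prodCongr φ)

lemma prodCellEquiv_mismatch_adj (φ : K ≃ K') (u v : (Γ × K) × (Γ × K)) :
    (mismatchGraph (cayleyLatinSquareGraph (Γ × K)) (cayleyLatinSquareGraph (Γ × K'))
        (prodCellEquiv Γ φ)).Adj (prodCellEquiv Γ φ u) (prodCellEquiv Γ φ v) ↔
      u.1.1 * u.2.1 = v.1.1 * v.2.1 ∧
        Xor (u.1.2 * u.2.2 = v.1.2 * v.2.2) (φ u.1.2 * φ u.2.2 = φ v.1.2 * φ v.2.2) := by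
  obtain ⟨⟨g, a⟩, ⟨h, b⟩⟩ := u
  obtain ⟨⟨g', a'⟩, ⟨h', b'⟩⟩ := v
  have hne : Xor (a * b = a' * b') (φ a * φ b = φ a' * φ b') → a ≠ a' ∧ b ≠ b' :=
    ne_and_ne_of_xor_mul_eq
  rw [prodCellEquiv, cayleyLatinSquareGraph, cayleyLatinSquareGraph,
    latinSquareGraph_mismatch_adj]
  simp only [Equiv.prodCongr_apply, Prod.map, Equiv.refl_apply, Prod.mk_mul_mk, Prod.mk.injEq,
    xor_def, ne_eq] at hne ⊢
  tauto

def cellsWithProductEquiv (c : Γ) (S : Set (K × K)) :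
    {v : (Γ × K) × (Γ × K) // c = v.1.1 * v.2.1 ∧ (v.1.2, v.2.2) ∈ S} ≃ Γ × S where
  toFun v := (v.1.1.1, ⟨(v.1.1.2, v.1.2.2), v.2.2⟩)
  invFun p := ⟨((p.1, p.2.1.1), (p.1⁻¹ * c, p.2.1.2)), by simp, p.2.2⟩
  left_inv := by
    rintro ⟨⟨⟨g, a⟩, ⟨h, b⟩⟩, rfl, -⟩
    simp
  right_inv := by
    rintro ⟨g, ⟨a, b⟩, -⟩
    rfl

lemma mismatchDeg_prodCellEquiv [Fintype K] [DecidableEq K] [DecidableEq K'] (φ : K ≃ K')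
    (u : (Γ × K) × (Γ × K)) :
    mismatchDeg (cayleyLatinSquareGraph (Γ × K)) (cayleyLatinSquareGraph (Γ × K'))
        (prodCellEquiv Γ φ) (prodCellEquiv Γ φ u) =
      Nat.card Γ * (productMismatches φ u.1.2 u.2.2).card := by
  set M := mismatchGraph (cayleyLatinSquareGraph (Γ × K)) (cayleyLatinSquareGraph (Γ × K'))
    (prodCellEquiv Γ φ)
  have hpulled : M.neighborSet (prodCellEquiv Γ φ u) ≃
      {v // M.Adj (prodCellEquiv Γ φ u) (prodCellEquiv Γ φ v)} :=
    (Equiv.subtypeEquiv (prodCellEquiv Γ φ) fun _ => Iff.rfl).symm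
  have hmismatch : {v // M.Adj (prodCellEquiv Γ φ u) (prodCellEquiv Γ φ v)} ≃
      {v : (Γ × K) × (Γ × K) // u.1.1 * u.2.1 = v.1.1 * v.2.1 ∧
        (v.1.2, v.2.2) ∈ (productMismatches φ u.1.2 u.2.2 : Set (K × K))} :=
    Equiv.subtypeEquivRight fun v => by
      simp [M, prodCellEquiv_mismatch_adj, productMismatches]
  rw [mismatchDeg, ← Nat.card_coe_set_eq,
    Nat.card_congr (hpulled.trans (hmismatch.trans (cellsWithProductEquiv _ _))),
    Nat.card_prod, Nat.card_coe_set_eq, Set.ncard_coe_finset]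

end GroupProduct

def binaryDigits : ZMod 4 ≃ ZMod 2 × ZMod 2 where
  toFun a := ((a.val / 2 : ℕ), (a.val : ℕ))
  invFun p := (2 * p.1.val + p.2.val : ℕ)
  left_inv := by decide
  right_inv := by decide

def binaryDigitsMul : Multiplicative (ZMod 4) ≃ Multiplicative (ZMod 2 × ZMod 2) :=
  Multiplicative.toAdd.trans (binaryDigits.trans Multiplicative.ofAdd)

lemma card_productMismatches_binaryDigitsMul_le (a b : Multiplicative (ZMod 4)) :
    (productMismatches binaryDigitsMul a b).card ≤ 4 := by
  revert a b
  decide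

lemma card_productMismatches_binaryDigitsMul_one :
    (productMismatches binaryDigitsMul 1 1).card = 4 := by
  decide

/-- Let `Γ` be a finite group, and let `G`, `H` be the Latin square
graphs of the Cayley tables of `Γ × ℤ₄` and `Γ × (ℤ₂)²` (each on `n = 16|Γ|²` vertices).
Then there is a bijection `π : V(G) → V(H)` with `MMC(π) = √n = 4|Γ|`. -/
theorem statement_18 {Γ : Type*} [Group Γ] [Fintype Γ] :
    ∃ π : (Γ × Multiplicative (ZMod 4)) × (Γ × Multiplicative (ZMod 4)) ≃
        (Γ × Multiplicative (ZMod 2 × ZMod 2)) × (Γ × Multiplicative (ZMod 2 × ZMod 2)),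
      MMC (cayleyLatinSquareGraph (Γ × Multiplicative (ZMod 4)))
          (cayleyLatinSquareGraph (Γ × Multiplicative (ZMod 2 × ZMod 2))) π
        = 4 * Fintype.card Γ := by
  set π := prodCellEquiv Γ binaryDigitsMul
  refine ⟨π, le_antisymm (Finset.sup_le fun x _ => ?_) ?_⟩
  · obtain ⟨u, rfl⟩ := π.surjective x
    rw [mismatchDeg_prodCellEquiv, Nat.card_eq_fintype_card, mul_comm]
    exact Nat.mul_le_mul_right _ (card_productMismatches_binaryDigitsMul_le _ _)
  · calc 4 * Fintype.card Γ
        = mismatchDeg (cayleyLatinSquareGraph (Γ × Multiplicative (ZMod 4)))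
            (cayleyLatinSquareGraph (Γ × Multiplicative (ZMod 2 × ZMod 2))) π
            (π ((1, 1), (1, 1))) := by
          rw [mismatchDeg_prodCellEquiv, card_productMismatches_binaryDigitsMul_one,
            Nat.card_eq_fintype_card, mul_comm]
      _ ≤ _ := Finset.le_sup (Finset.mem_univ _)
end
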